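/- arXiv:1412.2277 — 8 statements merged into one kernel-verified Lean document; each statement's English description precedes it below -/
import Mathlib

section
/- Let T ≥ 0, let u : [0,T] → U be a Borel measurable control and let x : [0,T] → X be an absolutely continuous trajectory satisfying x'(t) = f(x(t),u(t)) for almost every t ∈ [0,T]. Let μ be the occupation measure of this trajectory, i.e. the pushforward of Lebesgue measure on [0,T] under the map t ↦ (x(t),u(t)). Then for every continuously differentiable function v : ℝ^n → ℝ one has ∫_{X×U} ∇v(y)·f(y,w) dμ(y,w) = v(x(T)) − v(x(0)). -/
open MeasureTheory

noncomputable section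

set_option maxHeartbeats 1000000

/-- The occupation measure of a single admissible trajectory satisfies
`∫ ∇v·f dμ = v(x(T)) - v(x(0))` for every `C¹` function `v`.  Absolute continuity of the
trajectory together with `x' = f(x,u)` a.e. is expressed in the equivalent integral form
`x t = x 0 + ∫₀ᵗ f(x s, u s) ds`. -/
theorem stmt_0 {n m : ℕ}
    (X : Set (EuclideanSpace ℝ (Fin n))) (U : Set (EuclideanSpace ℝ (Fin m)))
    (hX : IsCompact X) (hU : IsCompact U)
    (f : EuclideanSpace ℝ (Fin n) × EuclideanSpace ℝ (Fin m) → EuclideanSpace ℝ (Fin n))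
    (hf : Continuous f)
    (T : ℝ) (hT : 0 ≤ T)
    (x : ℝ → EuclideanSpace ℝ (Fin n)) (u : ℝ → EuclideanSpace ℝ (Fin m))
    (hu : Measurable u)
    (hxX : ∀ t ∈ Set.Icc 0 T, x t ∈ X)
    (huU : ∀ t ∈ Set.Icc 0 T, u t ∈ U)
    (hode : ∀ t ∈ Set.Icc 0 T, x t = x 0 + ∫ s in Set.Icc 0 t, f (x s, u s))
    (μ : Measure (EuclideanSpace ℝ (Fin n) × EuclideanSpace ℝ (Fin m)))
    (hμ : μ = Measure.map (fun t => (x t, u t)) (volume.restrict (Set.Icc 0 T)))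
    (v : EuclideanSpace ℝ (Fin n) → ℝ) (hv : ContDiff ℝ 1 v) :
    ∫ p, fderiv ℝ v p.1 (f p) ∂μ = v (x T) - v (x 0) := by
  classical
  set g : ℝ → EuclideanSpace ℝ (Fin n) := fun s => f (x s, u s) with hgdef
  -- a uniform bound on `g` over `[0, T]`
  obtain ⟨c, hc⟩ : ∃ c, ∀ p ∈ X ×ˢ U, ‖f p‖ ≤ c :=
    (hX.prod hU).exists_bound_of_continuousOn hf.continuousOn
  have h0T : (0:ℝ) ∈ Set.Icc 0 T := ⟨le_rfl, hT⟩
  have hc0 : 0 ≤ c :=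
    le_trans (norm_nonneg _) (hc (x 0, u 0) ⟨hxX 0 h0T, huU 0 h0T⟩)
  have hgc : ∀ s ∈ Set.Icc 0 T, ‖g s‖ ≤ c := fun s hs => hc _ ⟨hxX s hs, huU s hs⟩
  -- splitting the primitive integral
  have hsplit : ∀ r r' : ℝ, 0 ≤ r → r ≤ r' → IntegrableOn g (Set.Icc 0 r') volume →
      (∫ s in Set.Icc 0 r', g s) = (∫ s in Set.Icc 0 r, g s) + ∫ s in Set.Ioc r r', g s := by
    intro r r' h0 hrr hint
    have hdisj : Disjoint (Set.Icc (0:ℝ) r) (Set.Ioc r r') :=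
      Set.disjoint_left.2 fun a ha ha' => absurd ha.2 (not_le.2 ha'.1)
    rw [← setIntegral_union hdisj measurableSet_Ioc
        (hint.mono_set (Set.Icc_subset_Icc_right hrr))
        (hint.mono_set ((Set.Ioc_subset_Icc_self).trans (Set.Icc_subset_Icc_left h0))),
      Set.Icc_union_Ioc_eq_Icc h0 hrr]
  have hIocb : ∀ r r' : ℝ, 0 ≤ r → r ≤ r' → r' ≤ T → ‖∫ s in Set.Ioc r r', g s‖ ≤ c * (r' - r) := by
    intro r r' h0 hrr hT'
    have hvol : volume (Set.Ioc r r') < ⊤ := by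
      rw [Real.volume_Ioc]; exact ENNReal.ofReal_lt_top
    have := norm_setIntegral_le_of_norm_le_const hvol
      (fun s hs => hgc s ⟨le_trans h0 hs.1.le, hs.2.trans hT'⟩)
    simpa [Measure.real, Real.volume_Ioc, ENNReal.toReal_ofReal (sub_nonneg.2 hrr)] using this
  -- Lipschitz continuity of `x` on intervals where `g` is integrable
  have hxcont : ∀ t ∈ Set.Icc (0:ℝ) T, IntegrableOn g (Set.Icc 0 t) volume →
      ContinuousOn x (Set.Icc 0 t) := by
    intro t ht hint
    apply (LipschitzOnWith.of_dist_le_mul (K := c.toNNReal) (f := x) (s := Set.Icc 0 t)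
      ?_).continuousOn
    intro r hr r' hr'
    have key : ∀ a b : ℝ, a ∈ Set.Icc (0:ℝ) t → b ∈ Set.Icc (0:ℝ) t → a ≤ b →
        dist (x b) (x a) ≤ c * (b - a) := by
      intro a b hb ha hab
      have haT : a ∈ Set.Icc (0:ℝ) T := ⟨hb.1, hb.2.trans ht.2⟩
      have hbT : b ∈ Set.Icc (0:ℝ) T := ⟨ha.1, ha.2.trans ht.2⟩
      have h1 : x b - x a = ∫ s in Set.Ioc a b, g s := by
        rw [hode a haT, hode b hbT,
          hsplit a b hb.1 hab (hint.mono_set (Set.Icc_subset_Icc_right ha.2))]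
        abel
      rw [dist_eq_norm, h1]
      exact hIocb a b hb.1 hab hbT.2
    rcases le_total r r' with h | h
    · calc dist (x r) (x r') = dist (x r') (x r) := dist_comm _ _
        _ ≤ c * (r' - r) := key r r' hr hr' h
        _ ≤ c.toNNReal * dist r r' := by
            rw [Real.coe_toNNReal c hc0, Real.dist_eq, abs_sub_comm]
            exact mul_le_mul_of_nonneg_left (le_abs_self _) hc0
    · calc dist (x r) (x r') ≤ c * (r - r') := key r' r hr' hr h
        _ ≤ c.toNNReal * dist r r' := by
            rw [Real.coe_toNNReal c hc0, Real.dist_eq]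
            exact mul_le_mul_of_nonneg_left (le_abs_self _) hc0
  have hgmeas : ∀ t ∈ Set.Icc (0:ℝ) T, IntegrableOn g (Set.Icc 0 t) volume →
      AEStronglyMeasurable g (volume.restrict (Set.Icc 0 t)) := by
    intro t ht hint
    exact (hf.measurable.comp_aemeasurable
      ((((hxcont t ht hint).aemeasurable measurableSet_Icc)).prodMk
        hu.aemeasurable)).aestronglyMeasurable
  -- bootstrap: `g` is integrable on `[0, T]`
  have hgi : IntegrableOn g (Set.Icc 0 T) volume := by
    set S := {t : ℝ | t ∈ Set.Icc (0:ℝ) T ∧ IntegrableOn g (Set.Icc 0 t) volume} with hSdef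
    have h0S : (0:ℝ) ∈ S := by
      refine ⟨h0T, ?_⟩
      have : volume.restrict (Set.Icc (0:ℝ) 0) = 0 := by
        rw [Measure.restrict_eq_zero]; simp
      rw [IntegrableOn, this]; exact integrable_zero_measure
    have hSne : S.Nonempty := ⟨0, h0S⟩
    have hSb : BddAbove S := ⟨T, fun b hb => hb.1.2⟩
    set τ := sSup S with hτdef
    have hτmem : τ ∈ Set.Icc (0:ℝ) T := ⟨le_csSup hSb h0S, csSup_le hSne fun b hb => hb.1.2⟩
    have hIcoS : ∀ t, 0 ≤ t → t < τ → t ∈ S := by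
      intro t h0 hlt
      obtain ⟨t', ht'S, htt'⟩ := exists_lt_of_lt_csSup hSne hlt
      exact ⟨⟨h0, htt'.le.trans ht'S.1.2⟩,
        ht'S.2.mono_set (Set.Icc_subset_Icc_right htt'.le)⟩
    have hloc : LocallyIntegrableOn g (Set.Ico 0 τ) volume := by
      intro r hr
      obtain ⟨t, hrt, htτ⟩ := exists_between hr.2
      have htS : t ∈ S := hIcoS t (hr.1.trans hrt.le) htτ
      refine ⟨Set.Icc 0 t, ?_, htS.2⟩
      refine Filter.mem_of_superset
        (Filter.inter_mem self_mem_nhdsWithin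
          (mem_nhdsWithin_of_mem_nhds (Iio_mem_nhds hrt))) ?_
      rintro a ⟨ha1, ha2⟩
      exact ⟨ha1.1, le_of_lt ha2⟩
    have hIcoInt : IntegrableOn g (Set.Ico 0 τ) volume := by
      refine Integrable.mono' (g := fun _ => c) ?_ hloc.aestronglyMeasurable ?_
      · apply integrableOn_const ?_
        rw [Real.volume_Ico]; exact ENNReal.ofReal_ne_top
      · filter_upwards [ae_restrict_mem measurableSet_Ico] with s hs
        exact hgc s ⟨hs.1, hs.2.le.trans hτmem.2⟩
    have hτS : τ ∈ S := by
      refine ⟨hτmem, ?_⟩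
      have hsing : IntegrableOn g {τ} volume := by
        have : volume.restrict ({τ} : Set ℝ) = 0 := by
          rw [Measure.restrict_eq_zero]; simp
        rw [IntegrableOn, this]; exact integrable_zero_measure
      have := hIcoInt.union hsing
      exact this.mono_set (by
        intro a ha
        rcases eq_or_lt_of_le ha.2 with h | h
        · exact Or.inr (by simp [h])
        · exact Or.inl ⟨ha.1, h⟩)
    have hxconst : ∀ t ∈ Set.Ioc τ T, x t = x 0 := by
      intro t ht
      have htT : t ∈ Set.Icc (0:ℝ) T := ⟨hτmem.1.trans ht.1.le, ht.2⟩
      have hnS : t ∉ S := fun hmem => absurd (le_csSup hSb hmem) (not_le.2 ht.1)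
      have hni : ¬ IntegrableOn g (Set.Icc 0 t) volume := fun h => hnS ⟨htT, h⟩
      rw [hode t htT, integral_undef hni, add_zero]
    have hIocInt : IntegrableOn g (Set.Ioc τ T) volume := by
      have hmeas : AEStronglyMeasurable g (volume.restrict (Set.Ioc τ T)) := by
        have hm : Measurable (fun s : ℝ => f (x 0, u s)) :=
          hf.measurable.comp ((measurable_const (a := x 0)).prodMk hu)
        refine hm.aestronglyMeasurable.congr ?_
        filter_upwards [ae_restrict_mem measurableSet_Ioc] with s hs
        show f (x 0, u s) = g s
        rw [hgdef]; simp only []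
        rw [hxconst s hs]
      refine Integrable.mono' (g := fun _ => c) ?_ hmeas ?_
      · apply integrableOn_const ?_
        rw [Real.volume_Ioc]; exact ENNReal.ofReal_ne_top
      · filter_upwards [ae_restrict_mem measurableSet_Ioc] with s hs
        exact hgc s ⟨hτmem.1.trans hs.1.le, hs.2⟩
    have := hτS.2.union hIocInt
    rwa [Set.Icc_union_Ioc_eq_Icc hτmem.1 hτmem.2] at this
  have hTmem : T ∈ Set.Icc (0:ℝ) T := ⟨hT, le_rfl⟩
  have hxc : ContinuousOn x (Set.Icc 0 T) := hxcont T hTmem hgi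
  have hpair : AEMeasurable (fun t => (x t, u t)) (volume.restrict (Set.Icc 0 T)) :=
    ((hxc.aemeasurable measurableSet_Icc).prodMk hu.aemeasurable)
  have hDv : Continuous (fderiv ℝ v) := hv.continuous_fderiv one_ne_zero
  have hφc : Continuous (fun p : EuclideanSpace ℝ (Fin n) × EuclideanSpace ℝ (Fin m) =>
      fderiv ℝ v p.1 (f p)) := (hDv.comp continuous_fst).clm_apply hf
  rw [hμ, integral_map hpair hφc.aestronglyMeasurable]
  have hgoal : (∫ t in Set.Icc 0 T, fderiv ℝ v (x t, u t).1 (f (x t, u t)))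
      = ∫ t in (0:ℝ)..T, fderiv ℝ v (x t) (g t) := by
    rw [intervalIntegral.integral_of_le hT, ← integral_Icc_eq_integral_Ioc]
  rw [hgoal]
  have hode' : ∀ t ∈ Set.Icc (0:ℝ) T, x t = x 0 + ∫ s in (0:ℝ)..t, g s := by
    intro t ht
    rw [intervalIntegral.integral_of_le ht.1, ← integral_Icc_eq_integral_Ioc]
    exact hode t ht
  set G : ℝ → EuclideanSpace ℝ (Fin n) := (Set.Icc 0 T).indicator g with hGdef
  have hGi : Integrable G volume := (integrable_indicator_iff measurableSet_Icc).2 hgi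
  have hGc : ∀ s, ‖G s‖ ≤ c := by
    intro s
    by_cases hs : s ∈ Set.Icc (0:ℝ) T
    · rw [hGdef, Set.indicator_of_mem hs]; exact hgc s hs
    · rw [hGdef, Set.indicator_of_notMem hs]; simpa using hc0
  have hGg : ∀ t ∈ Set.Icc (0:ℝ) T, (∫ s in (0:ℝ)..t, G s) = ∫ s in (0:ℝ)..t, g s := by
    intro t ht
    rw [intervalIntegral.integral_of_le ht.1, intervalIntegral.integral_of_le ht.1]
    refine setIntegral_congr_fun measurableSet_Ioc fun s hs => ?_
    have hsT : s ∈ Set.Icc (0:ℝ) T := ⟨hs.1.le, hs.2.trans ht.2⟩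
    exact Set.indicator_of_mem hsT g
  set K := Metric.cthickening 1 X with hKdef
  have hKc : IsCompact K := hX.cthickening
  have hXK : X ⊆ K := Metric.self_subset_cthickening X
  obtain ⟨M0, hM0⟩ := hKc.exists_bound_of_continuousOn hDv.continuousOn
  set M := max M0 0 with hMdef
  have hM : ∀ z ∈ K, ‖fderiv ℝ v z‖ ≤ M := fun z hz => (hM0 z hz).trans (le_max_left _ _)
  have hMnn : 0 ≤ M := le_max_right _ _
  have hψm : AEStronglyMeasurable (fun t => fderiv ℝ v (x t) (g t))
      (volume.restrict (Set.Icc 0 T)) :=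
    (hφc.measurable.comp_aemeasurable hpair).aestronglyMeasurable
  have hAi' : IntegrableOn (fun t => fderiv ℝ v (x t) (g t)) (Set.Icc 0 T) volume := by
    refine Integrable.mono' (g := fun _ => M * c) ?_ hψm ?_
    · apply integrableOn_const ?_
      rw [Real.volume_Icc]; exact ENNReal.ofReal_ne_top
    · filter_upwards [ae_restrict_mem measurableSet_Icc] with t ht
      calc ‖fderiv ℝ v (x t) (g t)‖ ≤ ‖fderiv ℝ v (x t)‖ * ‖g t‖ :=
            ContinuousLinearMap.le_opNorm _ _
        _ ≤ M * c := mul_le_mul (hM _ (hXK (hxX t ht))) (hgc t ht) (norm_nonneg _) hMnn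
  have hAi : IntervalIntegrable (fun t => fderiv ℝ v (x t) (g t)) volume 0 T := by
    rw [intervalIntegrable_iff_integrableOn_Ioc_of_le hT]
    exact hAi'.mono_set Set.Ioc_subset_Icc_self
  apply eq_of_forall_dist_le
  intro ε hε
  have hUC := hKc.uniformContinuousOn_of_continuous hDv.continuousOn
  have hcT : 0 ≤ c * T := mul_nonneg hc0 hT
  set ε₁ := ε / (3 * (c * T + 1)) with hε₁def
  have hε₁ : 0 < ε₁ := div_pos hε (by linarith)
  obtain ⟨δ₁, hδ₁, hδ₁p⟩ := Metric.uniformContinuousOn_iff.1 hUC ε₁ hε₁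
  obtain ⟨δ₂, hδ₂, hδ₂p⟩ :=
    Metric.continuousAt_iff.1 (hv.continuous.continuousAt (x := x T)) (ε / 3) (by linarith)
  set η := min (min 1 (δ₁ / 2)) (min (δ₂ / 2) (ε / (3 * (M + 1)))) with hηdef
  have hηpos : 0 < η :=
    lt_min (lt_min one_pos (by linarith)) (lt_min (by linarith) (by positivity))
  obtain ⟨g', hg'supp, hg'near, hg'cont, hg'int⟩ :=
    hGi.exists_hasCompactSupport_integral_sub_le hηpos
  have hGsub : Integrable (fun t => ‖G t - g' t‖) volume := (hGi.sub hg'int).norm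
  have hGsubI : IntervalIntegrable (fun t => ‖G t - g' t‖) volume 0 T :=
    hGsub.intervalIntegrable
  set y : ℝ → EuclideanSpace ℝ (Fin n) := fun t => x 0 + ∫ s in (0:ℝ)..t, g' s with hydef
  have hyd : ∀ t, HasDerivAt y (g' t) t := fun t =>
    (intervalIntegral.integral_hasDerivAt_right (hg'cont.intervalIntegrable 0 t)
      (hg'cont.stronglyMeasurableAtFilter volume (nhds t)) hg'cont.continuousAt).const_add (x 0)
  have hycont : Continuous y := continuous_iff_continuousAt.2 fun t => (hyd t).continuousAt
  have hy0 : y 0 = x 0 := by rw [hydef]; simp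
  have hnorm_int : ∀ t ∈ Set.Icc (0:ℝ) T, ‖y t - x t‖ ≤ η := by
    intro t ht
    have h1 : y t - x t = ∫ s in (0:ℝ)..t, (g' s - G s) := by
      rw [hode' t ht, ← hGg t ht]
      rw [intervalIntegral.integral_sub (hg'cont.intervalIntegrable 0 t)
        hGi.intervalIntegrable]
      show x 0 + (∫ s in (0:ℝ)..t, g' s) - (x 0 + ∫ s in (0:ℝ)..t, G s)
        = (∫ s in (0:ℝ)..t, g' s) - ∫ s in (0:ℝ)..t, G s
      abel
    rw [h1]
    calc ‖∫ s in (0:ℝ)..t, (g' s - G s)‖ ≤ ∫ s in (0:ℝ)..t, ‖g' s - G s‖ :=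
        intervalIntegral.norm_integral_le_integral_norm ht.1
      _ = ∫ s in Set.Ioc 0 t, ‖G s - g' s‖ := by
          rw [intervalIntegral.integral_of_le ht.1]
          exact setIntegral_congr_fun measurableSet_Ioc fun s _ => norm_sub_rev _ _
      _ ≤ ∫ s, ‖G s - g' s‖ :=
          setIntegral_le_integral hGsub
            (Filter.Eventually.of_forall fun s => norm_nonneg _)
      _ ≤ η := hg'near
  have hyK : ∀ t ∈ Set.Icc (0:ℝ) T, y t ∈ K := by
    intro t ht
    apply Metric.mem_cthickening_of_dist_le (y t) (x t) 1 X (hxX t ht)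
    rw [dist_eq_norm]
    exact (hnorm_int t ht).trans ((min_le_left _ _).trans (min_le_left _ _))
  have hw : ∀ t, HasDerivAt (fun s => v (y s)) (fderiv ℝ v (y t) (g' t)) t := fun t =>
    ((hv.differentiable one_ne_zero (y t)).hasFDerivAt).comp_hasDerivAt t (hyd t)
  have hBint : IntervalIntegrable (fun t => fderiv ℝ v (y t) (g' t)) volume 0 T :=
    ((hDv.comp hycont).clm_apply hg'cont).intervalIntegrable 0 T
  have hB : (∫ t in (0:ℝ)..T, fderiv ℝ v (y t) (g' t)) = v (y T) - v (y 0) :=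
    intervalIntegral.integral_eq_sub_of_hasDerivAt (fun t _ => hw t) hBint
  have hpt : ∀ t ∈ Set.Icc (0:ℝ) T,
      ‖fderiv ℝ v (x t) (g t) - fderiv ℝ v (y t) (g' t)‖ ≤ ε₁ * c + M * ‖G t - g' t‖ := by
    intro t ht
    have hGt : G t = g t := Set.indicator_of_mem ht g
    have hdec : fderiv ℝ v (x t) (g t) - fderiv ℝ v (y t) (g' t)
        = (fderiv ℝ v (x t) - fderiv ℝ v (y t)) (G t) + (fderiv ℝ v (y t)) (G t - g' t) := by
      rw [hGt]
      simp only [ContinuousLinearMap.sub_apply, map_sub]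
      abel
    rw [hdec]
    refine (norm_add_le _ _).trans (add_le_add ?_ ?_)
    · calc ‖(fderiv ℝ v (x t) - fderiv ℝ v (y t)) (G t)‖
          ≤ ‖fderiv ℝ v (x t) - fderiv ℝ v (y t)‖ * ‖G t‖ :=
            ContinuousLinearMap.le_opNorm _ _
        _ ≤ ε₁ * c := by
            refine mul_le_mul ?_ (hGc t) (norm_nonneg _) hε₁.le
            have hd : dist (x t) (y t) < δ₁ := by
              rw [dist_eq_norm, norm_sub_rev]
              exact lt_of_le_of_lt
                ((hnorm_int t ht).trans ((min_le_left _ _).trans (min_le_right _ _)))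
                (by linarith)
            have hlt := hδ₁p (x t) (hXK (hxX t ht)) (y t) (hyK t ht) hd
            rw [dist_eq_norm] at hlt
            exact hlt.le
    · calc ‖(fderiv ℝ v (y t)) (G t - g' t)‖
          ≤ ‖fderiv ℝ v (y t)‖ * ‖G t - g' t‖ := ContinuousLinearMap.le_opNorm _ _
        _ ≤ M * ‖G t - g' t‖ :=
            mul_le_mul_of_nonneg_right (hM _ (hyK t ht)) (norm_nonneg _)
  have hGnormle : (∫ t in (0:ℝ)..T, ‖G t - g' t‖) ≤ η := by
    rw [intervalIntegral.integral_of_le hT]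
    exact le_trans
      (setIntegral_le_integral hGsub
        (Filter.Eventually.of_forall fun s => norm_nonneg _)) hg'near
  have hABle : dist (∫ t in (0:ℝ)..T, fderiv ℝ v (x t) (g t))
      (∫ t in (0:ℝ)..T, fderiv ℝ v (y t) (g' t)) ≤ ε₁ * c * T + M * η := by
    rw [dist_eq_norm, ← intervalIntegral.integral_sub hAi hBint]
    have hABn : IntervalIntegrable
        (fun t => ‖fderiv ℝ v (x t) (g t) - fderiv ℝ v (y t) (g' t)‖) volume 0 T :=
      (hAi.sub hBint).norm
    have h2 : IntervalIntegrable (fun t => ε₁ * c + M * ‖G t - g' t‖) volume 0 T :=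
      intervalIntegrable_const.add (hGsubI.const_mul M)
    calc ‖∫ t in (0:ℝ)..T, (fderiv ℝ v (x t) (g t) - fderiv ℝ v (y t) (g' t))‖
        ≤ ∫ t in (0:ℝ)..T, ‖fderiv ℝ v (x t) (g t) - fderiv ℝ v (y t) (g' t)‖ :=
          intervalIntegral.norm_integral_le_integral_norm hT
      _ ≤ ∫ t in (0:ℝ)..T, (ε₁ * c + M * ‖G t - g' t‖) :=
          intervalIntegral.integral_mono_on hT hABn h2 hpt
      _ = ε₁ * c * T + M * ∫ t in (0:ℝ)..T, ‖G t - g' t‖ := by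
          rw [intervalIntegral.integral_add intervalIntegrable_const
              (hGsubI.const_mul M),
            intervalIntegral.integral_const, intervalIntegral.integral_const_mul]
          simp only [sub_zero, smul_eq_mul]
          ring
      _ ≤ ε₁ * c * T + M * η := by
          exact add_le_add_right (mul_le_mul_of_nonneg_left hGnormle hMnn) _
  have hε₁cT : ε₁ * c * T ≤ ε / 3 := by
    rw [hε₁def, div_mul_eq_mul_div, div_mul_eq_mul_div,
      div_le_div_iff₀ (by linarith : (0:ℝ) < 3 * (c * T + 1)) (by norm_num : (0:ℝ) < 3)]
    nlinarith
  have hMη : M * η ≤ ε / 3 := by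
    have h1 : η ≤ ε / (3 * (M + 1)) := (min_le_right _ _).trans (min_le_right _ _)
    have h4 : (0:ℝ) < M + 1 := by linarith
    have h2 : (M + 1) * η ≤ ε / 3 := by
      calc (M + 1) * η ≤ (M + 1) * (ε / (3 * (M + 1))) :=
            mul_le_mul_of_nonneg_left h1 h4.le
        _ = ε / 3 := by field_simp
    nlinarith [hηpos]
  have hend : dist (v (y T) - v (y 0)) (v (x T) - v (x 0)) ≤ ε / 3 := by
    rw [hy0, Real.dist_eq]
    have h3 : v (y T) - v (x 0) - (v (x T) - v (x 0)) = v (y T) - v (x T) := by ring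
    rw [h3, ← Real.dist_eq]
    apply le_of_lt
    apply hδ₂p
    rw [dist_eq_norm]
    exact lt_of_le_of_lt
      ((hnorm_int T hTmem).trans ((min_le_right _ _).trans (min_le_left _ _))) (by linarith)
  calc dist (∫ t in (0:ℝ)..T, fderiv ℝ v (x t) (g t)) (v (x T) - v (x 0))
      ≤ dist (∫ t in (0:ℝ)..T, fderiv ℝ v (x t) (g t))
          (∫ t in (0:ℝ)..T, fderiv ℝ v (y t) (g' t))
        + dist (∫ t in (0:ℝ)..T, fderiv ℝ v (y t) (g' t)) (v (x T) - v (x 0)) :=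
        dist_triangle _ _ _
    _ ≤ (ε₁ * c * T + M * η) + ε / 3 := add_le_add hABle (by rw [hB]; exact hend)
    _ ≤ ε := by linarith
end
end

section
/- Let μ0 be a Borel probability measure on X0 ⊆ X, and suppose that for each z in the support of μ0 one is given a terminal time T_z ∈ [0,T_M], a Borel measurable control u_z : [0,T_z] → U and an absolutely continuous trajectory x_z : [0,T_z] → X with x_z(0) = z, x_z(T_z) ∈ X_T and x_z'(t) = f(x_z(t),u_z(t)) for almost every t. Assume z ↦ T_z is Borel measurable and (z,t) ↦ (x_z(t),u_z(t)) is Borel measurable on {(z,t) : 0 ≤ t ≤ T_z}. Define the occupation measure μ by μ(A×B) := ∫_{X0} (∫_0^{T_z} 1[x_z(t) ∈ A, u_z(t) ∈ B] dt) dμ0(z) and the terminal measure μ_T by μ_T(A) := ∫_{X0} 1[x_z(T_z) ∈ A] dμ0(z) for Borel sets A ⊆ X, B ⊆ U. Then μ and μ_T satisfy the Liouville equation: ⟨μ, ∇v·f⟩ = ⟨μ_T, v⟩ − ⟨μ0, v⟩ for every v ∈ C¹(X). -/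
open MeasureTheory Set Filter Topology

noncomputable section

/-- The (topological) support of a measure: points all of whose neighbourhoods
have positive measure. -/
def msupport {α : Type*} [TopologicalSpace α] [MeasurableSpace α] (ν : Measure α) : Set α :=
  {x | ∀ s ∈ nhds x, ν s ≠ 0}

section Aux
open MeasureTheory Set Filter Topology

lemma msupport_compl_null {α : Type*} [TopologicalSpace α] [MeasurableSpace α]
    [SecondCountableTopology α] (ν : Measure α) :
    ν (msupport ν)ᶜ = 0 := by
  obtain ⟨B, hBc, -, hB⟩ := TopologicalSpace.exists_countable_basis α
  have : (msupport ν)ᶜ ⊆ ⋃₀ {s ∈ B | ν s = 0} := by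
    intro x hx
    simp only [msupport, Set.mem_compl_iff, Set.mem_setOf_eq, not_forall] at hx
    obtain ⟨s, hs, hνs⟩ := hx
    push_neg at hνs
    obtain ⟨t, htB, hxt, hts⟩ := hB.mem_nhds_iff.1 hs
    exact ⟨t, ⟨htB, measure_mono_null hts hνs⟩, hxt⟩
  refine measure_mono_null this ?_
  rw [measure_sUnion_null_iff (hBc.mono (Set.sep_subset _ _))]
  exact fun s hs => hs.2

lemma msupport_isClosed {α : Type*} [TopologicalSpace α] [MeasurableSpace α] (ν : Measure α) :
    IsClosed (msupport ν) := by
  rw [← isOpen_compl_iff]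
  rw [isOpen_iff_mem_nhds]
  intro x hx
  simp only [msupport, Set.mem_compl_iff, Set.mem_setOf_eq, not_forall] at hx
  obtain ⟨s, hs, hνs⟩ := hx
  push_neg at hνs
  filter_upwards [interior_mem_nhds.2 hs] with y hy
  intro hmem
  exact hmem (interior s) (isOpen_interior.mem_nhds hy)
    (measure_mono_null interior_subset hνs)


variable {E : Type*} [NormedAddCommGroup E] [NormedSpace ℝ E] [MeasurableSpace E]
  [BorelSpace E] [SecondCountableTopology E] [CompleteSpace E] [ProperSpace E]

lemma curve_ftc (v : E → ℝ) (hv : ContDiff ℝ 1 v) (T : ℝ) (hT : 0 ≤ T) (z : E)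
    (g : ℝ → E) (hgm : Measurable g) (C : ℝ)
    (hgb : ∀ s, ‖g s‖ ≤ C) (hgs : ∀ s ∉ Set.Icc 0 T, g s = 0) :
    ∫ t in Set.Icc 0 T, fderiv ℝ v (z + ∫ s in Set.Icc 0 t, g s) (g t)
      = v (z + ∫ s in Set.Icc 0 T, g s) - v z := by
  have hC0 : 0 ≤ C := le_trans (norm_nonneg _) (hgb 0)
  -- g is integrable
  have hgind : g = (Set.Icc 0 T).indicator g := by
    funext s
    by_cases hs : s ∈ Set.Icc 0 T
    · simp [hs]
    · simp [hs, hgs s hs]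
  have hgint : Integrable g volume := by
    rw [hgind]
    rw [integrable_indicator_iff measurableSet_Icc]
    exact Integrable.mono' (integrableOn_const measure_Icc_lt_top.ne)
      hgm.aestronglyMeasurable.restrict (Eventually.of_forall fun s => hgb s)
  -- approximating sequence
  have happrox : ∀ k : ℕ, ∃ gk : ℝ → E, HasCompactSupport gk ∧
      (∫ s, ‖g s - gk s‖) ≤ 1 / (k + 1) ∧ Continuous gk ∧ Integrable gk volume := by
    intro k
    exact hgint.exists_hasCompactSupport_integral_sub_le (by positivity)
  choose gk hgk1 hgk2 hgk3 hgk4 using happrox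
  set x : ℝ → E := fun t => z + ∫ s in Set.Icc 0 t, g s with hx
  set X : ℕ → ℝ → E := fun k t => z + ∫ s in (0:ℝ)..t, gk k s with hX
  -- the distance bound
  have hdist : ∀ k, ∀ t ∈ Set.Icc 0 T, ‖X k t - x t‖ ≤ 1 / (k + 1) := by
    intro k t ht
    have h1 : X k t - x t = ∫ s in Set.Ioc 0 t, (gk k s - g s) := by
      rw [hX, hx]
      simp only [add_sub_add_left_eq_sub]
      rw [intervalIntegral.integral_of_le ht.1, MeasureTheory.integral_Icc_eq_integral_Ioc,
        integral_sub ((hgk4 k).integrableOn) (hgint.integrableOn)]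
    rw [h1]
    calc ‖∫ s in Set.Ioc 0 t, (gk k s - g s)‖
        ≤ ∫ s in Set.Ioc 0 t, ‖gk k s - g s‖ := norm_integral_le_integral_norm _
      _ ≤ ∫ s, ‖gk k s - g s‖ :=
          setIntegral_le_integral ((hgk4 k).sub hgint).norm
            (Eventually.of_forall fun s => norm_nonneg _)
      _ = ∫ s, ‖g s - gk k s‖ := by simp_rw [norm_sub_rev]
      _ ≤ 1 / (k + 1) := hgk2 k
  have hklim : Tendsto (fun k : ℕ => 1 / ((k : ℝ) + 1)) atTop (nhds 0) :=
    tendsto_one_div_add_atTop_nhds_zero_nat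
  -- X k t tends to x t
  have hXlim : ∀ t ∈ Set.Icc 0 T, Tendsto (fun k => X k t) atTop (nhds (x t)) := by
    intro t ht
    rw [tendsto_iff_norm_sub_tendsto_zero]
    exact squeeze_zero (fun k => norm_nonneg _) (fun k => hdist k t ht) hklim
  -- continuity of X k
  have hXcont : ∀ k, Continuous (X k) := fun k =>
    continuous_const.add (intervalIntegral.continuous_primitive
      (fun a b => (hgk3 k).intervalIntegrable a b) 0)
  -- bound on the derivative on a ball containing everything
  set R : ℝ := ‖z‖ + C * T + 1 with hR
  have hxball : ∀ t ∈ Set.Icc 0 T, ‖x t‖ ≤ ‖z‖ + C * T := by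
    intro t ht
    have : ‖∫ s in Set.Icc 0 t, g s‖ ≤ C * (volume (Set.Icc 0 t)).toReal :=
      norm_setIntegral_le_of_norm_le_const measure_Icc_lt_top (fun s _ => hgb s)
    have h2 : (volume (Set.Icc 0 t)).toReal = t := by
      rw [Real.volume_Icc]; rw [ENNReal.toReal_ofReal (by linarith [ht.1])]; ring
    calc ‖x t‖ ≤ ‖z‖ + ‖∫ s in Set.Icc 0 t, g s‖ := norm_add_le _ _
      _ ≤ ‖z‖ + C * t := by rw [h2] at this; linarith
      _ ≤ ‖z‖ + C * T := by nlinarith [ht.2, ht.1]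
  have hxmem : ∀ t ∈ Set.Icc 0 T, x t ∈ Metric.closedBall (0:E) R := by
    intro t ht
    rw [Metric.mem_closedBall, dist_zero_right]
    linarith [hxball t ht]
  have hXmem : ∀ k, ∀ t ∈ Set.Icc 0 T, X k t ∈ Metric.closedBall (0:E) R := by
    intro k t ht
    rw [Metric.mem_closedBall, dist_zero_right]
    have h1 : ‖X k t‖ ≤ ‖x t‖ + ‖X k t - x t‖ := by
      have := norm_add_le (x t) (X k t - x t); simpa using this
    have h2 : 1 / ((k:ℝ) + 1) ≤ 1 := by
      rw [div_le_one (by positivity)]; linarith [Nat.cast_nonneg (α := ℝ) k]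
    linarith [hxball t ht, hdist k t ht]
  obtain ⟨M, hM⟩ := (isCompact_closedBall (0:E) R).exists_bound_of_continuousOn
    (hv.continuous_fderiv one_ne_zero).continuousOn
  have hM0 : 0 ≤ M := le_trans (norm_nonneg _) (hM 0 (by
    rw [Metric.mem_closedBall, dist_zero_right, norm_zero]; positivity))
  -- derivative evaluation is continuous in (point, direction)
  have hDcont : Continuous (fun p : E × E => fderiv ℝ v p.1 p.2) :=
    ((hv.continuous_fderiv one_ne_zero).comp continuous_fst).clm_apply continuous_snd
  -- FTC for each k
  have hFTC : ∀ k, ∫ t in Set.Icc 0 T, fderiv ℝ v (X k t) (gk k t)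
      = v (X k T) - v z := by
    intro k
    have hderiv : ∀ t ∈ Set.uIcc (0:ℝ) T,
        HasDerivAt (fun u => v (X k u)) (fderiv ℝ v (X k t) (gk k t)) t := by
      intro t _
      have h1 : HasDerivAt (X k) (gk k t) t := by
        have := intervalIntegral.integral_hasDerivAt_right
          ((hgk3 k).intervalIntegrable 0 t)
          ((hgk3 k).stronglyMeasurable.stronglyMeasurableAtFilter)
          (hgk3 k).continuousAt
        exact this.const_add z
      exact ((hv.differentiable one_ne_zero (X k t)).hasFDerivAt).comp_hasDerivAt t h1
    have hint : IntervalIntegrable (fun t => fderiv ℝ v (X k t) (gk k t)) volume 0 T :=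
      (hDcont.comp ((hXcont k).prodMk (hgk3 k))).intervalIntegrable 0 T
    have := intervalIntegral.integral_eq_sub_of_hasDerivAt hderiv hint
    rw [intervalIntegral.integral_of_le hT, ← MeasureTheory.integral_Icc_eq_integral_Ioc] at this
    rw [this, hX]
    simp
  -- measurability of the main integrands
  have hmeasI : ∀ k, AEStronglyMeasurable (fun t => fderiv ℝ v (X k t) (g t))
      (volume.restrict (Set.Icc 0 T)) :=
    fun k => (hDcont.measurable.comp ((hXcont k).measurable.prodMk hgm)).aestronglyMeasurable.restrict
  -- B k tendsto
  have hB : Tendsto (fun k => ∫ t in Set.Icc 0 T, fderiv ℝ v (X k t) (g t)) atTop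
      (nhds (∫ t in Set.Icc 0 T, fderiv ℝ v (x t) (g t))) := by
    refine tendsto_integral_of_dominated_convergence (fun _ => M * C) hmeasI
      (integrableOn_const measure_Icc_lt_top.ne) ?_ ?_
    · intro k
      filter_upwards [ae_restrict_mem measurableSet_Icc] with t ht
      calc ‖fderiv ℝ v (X k t) (g t)‖ ≤ ‖fderiv ℝ v (X k t)‖ * ‖g t‖ :=
            ContinuousLinearMap.le_opNorm _ _
        _ ≤ M * C := mul_le_mul (hM _ (hXmem k t ht)) (hgb t) (norm_nonneg _) hM0
    · filter_upwards [ae_restrict_mem measurableSet_Icc] with t ht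
      exact (hDcont.continuousAt.tendsto.comp
        (((hXlim t ht).prodMk_nhds tendsto_const_nhds)))
  -- C k tendsto zero
  have hCk : ∀ k, ‖∫ t in Set.Icc 0 T, fderiv ℝ v (X k t) (gk k t - g t)‖ ≤ M * (1 / (k + 1)) := by
    intro k
    calc ‖∫ t in Set.Icc 0 T, fderiv ℝ v (X k t) (gk k t - g t)‖
        ≤ ∫ t in Set.Icc 0 T, ‖fderiv ℝ v (X k t) (gk k t - g t)‖ :=
          norm_integral_le_integral_norm _
      _ ≤ ∫ t in Set.Icc 0 T, M * ‖gk k t - g t‖ := by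
          refine integral_mono_of_nonneg (Eventually.of_forall fun t => norm_nonneg _)
            ((((hgk4 k).sub hgint).norm.const_mul M).integrableOn) ?_
          filter_upwards [ae_restrict_mem measurableSet_Icc] with t ht
          calc ‖fderiv ℝ v (X k t) (gk k t - g t)‖
              ≤ ‖fderiv ℝ v (X k t)‖ * ‖gk k t - g t‖ := ContinuousLinearMap.le_opNorm _ _
            _ ≤ M * ‖gk k t - g t‖ :=
              mul_le_mul_of_nonneg_right (hM _ (hXmem k t ht)) (norm_nonneg _)
      _ = M * ∫ t in Set.Icc 0 T, ‖gk k t - g t‖ := integral_const_mul M _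
      _ ≤ M * (1 / (k + 1)) := by
          refine mul_le_mul_of_nonneg_left ?_ hM0
          calc ∫ t in Set.Icc 0 T, ‖gk k t - g t‖
              ≤ ∫ t, ‖gk k t - g t‖ := setIntegral_le_integral ((hgk4 k).sub hgint).norm
                (Eventually.of_forall fun s => norm_nonneg _)
            _ = ∫ t, ‖g t - gk k t‖ := by simp_rw [norm_sub_rev]
            _ ≤ 1 / (k + 1) := hgk2 k
  have hC : Tendsto (fun k => ∫ t in Set.Icc 0 T, fderiv ℝ v (X k t) (gk k t - g t)) atTop
      (nhds 0) := by
    rw [tendsto_zero_iff_norm_tendsto_zero]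
    refine squeeze_zero (fun k => norm_nonneg _) hCk ?_
    simpa using hklim.const_mul M
  -- splitting
  have hsplit : ∀ k, ∫ t in Set.Icc 0 T, fderiv ℝ v (X k t) (gk k t)
      = (∫ t in Set.Icc 0 T, fderiv ℝ v (X k t) (g t))
        + ∫ t in Set.Icc 0 T, fderiv ℝ v (X k t) (gk k t - g t) := by
    intro k
    rw [← integral_add]
    · refine setIntegral_congr_fun measurableSet_Icc fun t _ => ?_
      simp [map_sub]
    · refine Integrable.mono'
        ((integrableOn_const measure_Icc_lt_top.ne) :
          IntegrableOn (fun _ : ℝ => M * C) (Icc 0 T) volume)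
        (hmeasI k) ?_
      filter_upwards [ae_restrict_mem measurableSet_Icc] with t ht
      calc ‖fderiv ℝ v (X k t) (g t)‖ ≤ ‖fderiv ℝ v (X k t)‖ * ‖g t‖ :=
            ContinuousLinearMap.le_opNorm _ _
        _ ≤ M * C := mul_le_mul (hM _ (hXmem k t ht)) (hgb t) (norm_nonneg _) hM0
    · refine Integrable.mono' ((((hgk4 k).sub hgint).norm.const_mul M).integrableOn)
        ((hDcont.measurable.comp
          ((hXcont k).measurable.prodMk ((hgk3 k).measurable.sub hgm))).aestronglyMeasurable.restrict) ?_
      filter_upwards [ae_restrict_mem measurableSet_Icc] with t ht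
      calc ‖fderiv ℝ v (X k t) (gk k t - g t)‖
          ≤ ‖fderiv ℝ v (X k t)‖ * ‖gk k t - g t‖ := ContinuousLinearMap.le_opNorm _ _
        _ ≤ M * ‖gk k t - g t‖ :=
            mul_le_mul_of_nonneg_right (hM _ (hXmem k t ht)) (norm_nonneg _)
  -- conclude
  have hlim1 : Tendsto (fun k => ∫ t in Set.Icc 0 T, fderiv ℝ v (X k t) (gk k t)) atTop
      (nhds (∫ t in Set.Icc 0 T, fderiv ℝ v (x t) (g t))) := by
    simp_rw [hsplit]
    simpa using hB.add hC
  have hlim2 : Tendsto (fun k => v (X k T) - v z) atTop (nhds (v (x T) - v z)) :=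
    ((hv.continuous.tendsto _).comp (hXlim T ⟨hT, le_rfl⟩)).sub tendsto_const_nhds
  have := tendsto_nhds_unique (by simpa only [hFTC] using hlim1 : Tendsto
    (fun k => v (X k T) - v z) atTop (nhds (∫ t in Set.Icc 0 T, fderiv ℝ v (x t) (g t)))) hlim2
  exact this


end Aux

/-- The occupation measure and terminal measure of a superposition of
admissible trajectories (distributed according to an initial probability measure `μ0`)
satisfy the Liouville equation `⟨μ, ∇v·f⟩ = ⟨μ_T, v⟩ − ⟨μ0, v⟩` for every `C¹` function `v`.
Trajectories are given in the equivalent integral (absolutely continuous) form. -/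
theorem stmt_1 {n m : ℕ}
    (X X0 XT : Set (EuclideanSpace ℝ (Fin n))) (U : Set (EuclideanSpace ℝ (Fin m)))
    (hX : IsCompact X) (hU : IsCompact U) (hXT : IsCompact XT)
    (hXTX : XT ⊆ X) (hX0 : X0 ⊆ X)
    (f : EuclideanSpace ℝ (Fin n) × EuclideanSpace ℝ (Fin m) → EuclideanSpace ℝ (Fin n))
    (hf : Continuous f)
    (TM : ℝ) (hTM : 0 < TM)
    (μ0 : Measure (EuclideanSpace ℝ (Fin n))) [IsProbabilityMeasure μ0]
    (hμ0 : μ0 (X0ᶜ) = 0)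
    (Tz : EuclideanSpace ℝ (Fin n) → ℝ)
    (xz : EuclideanSpace ℝ (Fin n) → ℝ → EuclideanSpace ℝ (Fin n))
    (uz : EuclideanSpace ℝ (Fin n) → ℝ → EuclideanSpace ℝ (Fin m))
    (hTz : Measurable Tz)
    (hmeas : Measurable
      (fun p : EuclideanSpace ℝ (Fin n) × ℝ => (xz p.1 p.2, uz p.1 p.2)))
    (htraj : ∀ z ∈ msupport μ0,
      Tz z ∈ Set.Icc 0 TM ∧ xz z 0 = z ∧ xz z (Tz z) ∈ XT ∧
      (∀ t ∈ Set.Icc 0 (Tz z), xz z t ∈ X ∧ uz z t ∈ U) ∧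
      (∀ t ∈ Set.Icc 0 (Tz z), xz z t = z + ∫ s in Set.Icc 0 t, f (xz z s, uz z s)))
    (μ : Measure (EuclideanSpace ℝ (Fin n) × EuclideanSpace ℝ (Fin m)))
    (μT : Measure (EuclideanSpace ℝ (Fin n)))
    (hμ : ∀ A B, MeasurableSet A → MeasurableSet B →
      μ (A ×ˢ B) =
        ∫⁻ z, volume {t | t ∈ Set.Icc 0 (Tz z) ∧ xz z t ∈ A ∧ uz z t ∈ B} ∂μ0)
    (hμT : ∀ A, MeasurableSet A → μT A = μ0 {z | xz z (Tz z) ∈ A})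
    (v : EuclideanSpace ℝ (Fin n) → ℝ) (hv : ContDiff ℝ 1 v) :
    ∫ p, fderiv ℝ v p.1 (f p) ∂μ = ∫ x, v x ∂μT - ∫ x, v x ∂μ0 := by
  classical
  have hN : μ0 (msupport μ0)ᶜ = 0 := msupport_compl_null μ0
  have hae : ∀ᵐ z ∂μ0, z ∈ msupport μ0 := by
    rw [Filter.eventually_iff, mem_ae_iff]
    simpa using hN
  -- the parametrizing set S and the pushforward map Φ
  set S : Set (EuclideanSpace ℝ (Fin n) × ℝ) := {p | 0 ≤ p.2 ∧ p.2 ≤ Tz p.1} with hSdef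
  have hS : MeasurableSet S :=
    (measurableSet_le measurable_const measurable_snd).inter
      (measurableSet_le measurable_snd (hTz.comp measurable_fst))
  set Φ : EuclideanSpace ℝ (Fin n) × ℝ → EuclideanSpace ℝ (Fin n) × EuclideanSpace ℝ (Fin m) := fun p => (xz p.1 p.2, uz p.1 p.2) with hΦdef
  set ν : Measure (EuclideanSpace ℝ (Fin n) × ℝ) := (μ0.prod volume).restrict S with hνdef
  -- slice computation
  have hslice : ∀ (A : Set (EuclideanSpace ℝ (Fin n))) (B : Set (EuclideanSpace ℝ (Fin m))), MeasurableSet A → MeasurableSet B →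
      (μ0.prod volume) (Φ ⁻¹' (A ×ˢ B) ∩ S)
        = ∫⁻ z, volume {t | t ∈ Set.Icc 0 (Tz z) ∧ xz z t ∈ A ∧ uz z t ∈ B} ∂μ0 := by
    intro A B hA hB
    rw [Measure.prod_apply ((hmeas (hA.prod hB)).inter hS)]
    refine lintegral_congr fun z => ?_
    congr 1
    ext t
    simp only [Set.mem_preimage, Set.mem_inter_iff, Set.mem_prod, Set.mem_setOf_eq,
      Set.mem_Icc, hSdef, hΦdef]
    tauto
  -- finiteness
  have hvol_ae : ∀ᵐ z ∂μ0, volume (Set.Icc 0 (Tz z)) ≤ ENNReal.ofReal TM := by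
    filter_upwards [hae] with z hz
    rw [Real.volume_Icc]
    exact ENNReal.ofReal_le_ofReal (by simpa using (htraj z hz).1.2)
  have hbound : ∫⁻ z, volume (Set.Icc 0 (Tz z)) ∂μ0 < ⊤ := by
    calc ∫⁻ z, volume (Set.Icc 0 (Tz z)) ∂μ0
        ≤ ∫⁻ _, ENNReal.ofReal TM ∂μ0 := lintegral_mono_ae hvol_ae
      _ = ENNReal.ofReal TM := by simp
      _ < ⊤ := ENNReal.ofReal_lt_top
  have hSfin : (μ0.prod volume) S < ⊤ := by
    rw [Measure.prod_apply hS]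
    refine lt_of_le_of_lt (le_of_eq (lintegral_congr fun z => ?_)) hbound
    congr 1
  have hμfin : IsFiniteMeasure μ := by
    constructor
    rw [← Set.univ_prod_univ, hμ _ _ MeasurableSet.univ MeasurableSet.univ]
    refine lt_of_le_of_lt (le_of_eq (lintegral_congr fun z => ?_)) hbound
    congr 1
    ext t
    simp [Set.mem_Icc]
  -- μ is the pushforward of ν under Φ
  have hμeq : μ = ν.map Φ := by
    have hνΦfin : IsFiniteMeasure (ν.map Φ) := by
      constructor
      rw [Measure.map_apply hmeas MeasurableSet.univ]
      exact lt_of_le_of_lt (measure_mono (Set.subset_univ _))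
        (by rw [hνdef, Measure.restrict_apply MeasurableSet.univ, Set.univ_inter]; exact hSfin)
    refine ext_of_generate_finite _ generateFrom_prod.symm isPiSystem_prod ?_ ?_
    · rintro s ⟨A, hA, B, hB, rfl⟩
      replace hA : MeasurableSet A := hA
      replace hB : MeasurableSet B := hB
      rw [hμ A B hA hB, Measure.map_apply hmeas (hA.prod hB), hνdef,
        Measure.restrict_apply (hmeas (hA.prod hB)), hslice A B hA hB]
    · rw [← Set.univ_prod_univ, hμ _ _ MeasurableSet.univ MeasurableSet.univ,
        Measure.map_apply hmeas (MeasurableSet.univ.prod MeasurableSet.univ), hνdef,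
        Measure.restrict_apply (hmeas (MeasurableSet.univ.prod MeasurableSet.univ)),
        hslice _ _ MeasurableSet.univ MeasurableSet.univ]
  -- μT is the pushforward of μ0
  set gT : EuclideanSpace ℝ (Fin n) → EuclideanSpace ℝ (Fin n) := fun z => xz z (Tz z) with hgTdef
  have hgT : Measurable gT := (hmeas.comp (measurable_id.prodMk hTz)).fst
  have hμTeq : μT = μ0.map gT := by
    refine Measure.ext fun A hA => ?_
    rw [Measure.map_apply hgT hA, hμT A hA]
    rfl
  -- the integrand
  set G : EuclideanSpace ℝ (Fin n) × EuclideanSpace ℝ (Fin m) → ℝ := fun p => fderiv ℝ v p.1 (f p) with hGdef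
  have hGcont : Continuous G :=
    (((hv.continuous_fderiv one_ne_zero).comp continuous_fst).clm_apply hf)
  obtain ⟨C₁, hC₁⟩ := (hX.prod hU).exists_bound_of_continuousOn hGcont.continuousOn
  set C2 := max C₁ 0 with hC2def
  -- support inclusion
  have hsupp_sub : msupport μ0 ⊆ X := by
    intro z hz
    have h1 : z ∈ closure X0 := by
      by_contra h
      exact hz (closure X0)ᶜ ((isOpen_compl_iff.2 isClosed_closure).mem_nhds h)
        (measure_mono_null (Set.compl_subset_compl.2 subset_closure) hμ0)
    exact closure_minimal hX0 hX.isClosed h1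
  -- bound for v on X
  obtain ⟨Cv, hCv⟩ := hX.exists_bound_of_continuousOn hv.continuous.continuousOn
  set Cv2 := max Cv 0 with hCv2def
  -- bound for f on X ×ˢ U
  obtain ⟨Cf, hCf⟩ := (hX.prod hU).exists_bound_of_continuousOn hf.continuousOn
  set Cf2 := max Cf 0 with hCf2def
  -- a.e. of the product measure, points have first coordinate in the support
  have haeP : ∀ᵐ (p : EuclideanSpace ℝ (Fin n) × ℝ) ∂(μ0.prod volume), p.1 ∈ msupport μ0 := by
    rw [Filter.eventually_iff, mem_ae_iff]
    have h1 : {p : EuclideanSpace ℝ (Fin n) × ℝ | p.1 ∈ msupport μ0}ᶜ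
        = (msupport μ0)ᶜ ×ˢ (Set.univ : Set ℝ) := by
      ext p; simp
    rw [h1, Measure.prod_prod, hN, zero_mul]
  -- integrability of the indicator integrand
  have hGΦmeas : Measurable (fun q => G (Φ q)) := hGcont.measurable.comp hmeas
  have hFint : Integrable (S.indicator (fun q => G (Φ q))) (μ0.prod volume) := by
    refine Integrable.mono'
      ((integrable_indicator_iff hS).2
        ((integrableOn_const hSfin.ne) :
          IntegrableOn (fun _ => C2) S (μ0.prod volume)))
      ((hGΦmeas.indicator hS).aestronglyMeasurable) ?_
    filter_upwards [haeP] with p hp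
    by_cases hpS : p ∈ S
    · rw [Set.indicator_of_mem hpS, Set.indicator_of_mem hpS]
      have hmem := ((htraj p.1 hp).2.2.2.1) p.2 (Set.mem_Icc.2 ⟨hpS.1, hpS.2⟩)
      exact le_trans (hC₁ _ (Set.mem_prod.2 ⟨hmem.1, hmem.2⟩)) (le_max_left _ _)
    · rw [Set.indicator_of_notMem hpS, Set.indicator_of_notMem hpS]
      simp [le_max_right Cv 0]
  -- rewrite the left-hand side via Fubini
  have hLHS : ∫ p, fderiv ℝ v p.1 (f p) ∂μ
      = ∫ z, (∫ t in Set.Icc 0 (Tz z), fderiv ℝ v (xz z t) (f (xz z t, uz z t))) ∂μ0 := by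
    calc ∫ p, fderiv ℝ v p.1 (f p) ∂μ
        = ∫ p, G p ∂(ν.map Φ) := by rw [← hμeq]
      _ = ∫ q, G (Φ q) ∂ν := integral_map hmeas.aemeasurable hGcont.aestronglyMeasurable
      _ = ∫ q, S.indicator (fun q => G (Φ q)) q ∂(μ0.prod volume) := by
          rw [hνdef, ← integral_indicator hS]
      _ = ∫ z, (∫ t, S.indicator (fun q => G (Φ q)) (z, t)) ∂μ0 := integral_prod _ hFint
      _ = ∫ z, (∫ t in Set.Icc 0 (Tz z), fderiv ℝ v (xz z t) (f (xz z t, uz z t))) ∂μ0 := by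
          refine integral_congr_ae (Eventually.of_forall fun z => ?_)
          refine Eq.trans ?_ (integral_indicator measurableSet_Icc)
          refine integral_congr_ae (Eventually.of_forall fun t => ?_)
          by_cases ht : t ∈ Set.Icc 0 (Tz z)
          · simp only [Set.indicator_of_mem ht,
              Set.indicator_of_mem (show (z, t) ∈ S from ⟨ht.1, ht.2⟩)]
            rfl
          · simp only [Set.indicator_of_notMem ht, Set.indicator_of_notMem
              (show (z, t) ∉ S from fun h => ht (Set.mem_Icc.2 ⟨h.1, h.2⟩))]
  -- rewrite the right-hand side
  have hμTint : ∫ x, v x ∂μT = ∫ z, v (gT z) ∂μ0 := by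
    rw [hμTeq, integral_map hgT.aemeasurable hv.continuous.aestronglyMeasurable]
  have hint1 : Integrable (fun z => v (gT z)) μ0 := by
    refine Integrable.mono' (integrable_const Cv2)
      ((hv.continuous.measurable.comp hgT).aestronglyMeasurable) ?_
    filter_upwards [hae] with z hz
    exact le_trans (hCv _ (hXTX ((htraj z hz).2.2.1))) (le_max_left _ _)
  have hint2 : Integrable v μ0 := by
    refine Integrable.mono' (integrable_const Cv2)
      hv.continuous.measurable.aestronglyMeasurable ?_
    filter_upwards [hae] with z hz
    exact le_trans (hCv _ (hsupp_sub hz)) (le_max_left _ _)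
  rw [hLHS, hμTint, ← integral_sub hint1 hint2]
  -- pointwise identity on the support
  refine integral_congr_ae ?_
  filter_upwards [hae] with z hz
  obtain ⟨hT1, hT2, hT3, hT4, hT5⟩ := htraj z hz
  set T := Tz z with hTdef
  have hT0 : 0 ≤ T := hT1.1
  set gz : ℝ → EuclideanSpace ℝ (Fin n) :=
    (Set.Icc 0 T).indicator (fun s => f (xz z s, uz z s)) with hgzdef
  have hgzm : Measurable gz := by
    refine Measurable.indicator ?_ measurableSet_Icc
    exact hf.measurable.comp (hmeas.comp (measurable_const.prodMk measurable_id))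
  have hgzb : ∀ s, ‖gz s‖ ≤ Cf2 := by
    intro s
    by_cases hs : s ∈ Set.Icc 0 T
    · rw [hgzdef, Set.indicator_of_mem hs]
      have hmem := hT4 s hs
      exact le_trans (hCf _ (Set.mem_prod.2 ⟨hmem.1, hmem.2⟩)) (le_max_left _ _)
    · rw [hgzdef, Set.indicator_of_notMem hs]
      simp [hCf2def, le_max_right Cf 0]
  have hgz0 : ∀ s ∉ Set.Icc 0 T, gz s = 0 := fun s hs => Set.indicator_of_notMem hs _
  have hkey := curve_ftc v hv T hT0 z gz hgzm Cf2 hgzb hgz0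
  -- identify the curve with the trajectory
  have hxeq : ∀ t ∈ Set.Icc 0 T, z + (∫ s in Set.Icc 0 t, gz s) = xz z t := by
    intro t ht
    have h1 : ∫ s in Set.Icc 0 t, gz s = ∫ s in Set.Icc 0 t, f (xz z s, uz z s) := by
      refine setIntegral_congr_fun measurableSet_Icc fun s hs => ?_
      exact Set.indicator_of_mem (Set.mem_Icc.2 ⟨hs.1, le_trans hs.2 ht.2⟩) _
    rw [h1, ← hT5 t ht]
  have h2 : ∫ t in Set.Icc 0 T, fderiv ℝ v (xz z t) (f (xz z t, uz z t))
      = ∫ t in Set.Icc 0 T, fderiv ℝ v (z + ∫ s in Set.Icc 0 t, gz s) (gz t) := by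
    refine setIntegral_congr_fun measurableSet_Icc fun t ht => ?_
    rw [hxeq t ht, hgzdef, Set.indicator_of_mem ht]
  rw [h2, hkey, hxeq T (Set.mem_Icc.2 ⟨hT0, le_rfl⟩)]
end
end

section
/- Let l : X×U → ℝ be continuous, μ0 ∈ M_+(X) and T_M > 0, and suppose there exists at least one pair feasible for ocp(l,μ0,T_M). Let (μ,μ_T) be feasible for ocp(l,μ0,T_M), and let (v_k,w_k), k ∈ ℕ, be a sequence with v_k ∈ C¹(X), w_k ≥ 0, l + w_k + ∇v_k·f ≥ 0 on X×U and v_k ≤ 0 on X_T for every k. Then the following are equivalent: (i) (μ,μ_T) minimizes ⟨ν,l⟩ over feasible pairs and ⟨μ0,v_k⟩ − w_k·T_M converges to this minimum value; (ii) ⟨μ0,v_k⟩ − w_k·T_M → ⟨μ,l⟩ as k → ∞; (iii) w_k·(μ(X×U) − T_M) → 0, ⟨μ, l + w_k + ∇v_k·f⟩ → 0, and ⟨μ_T, v_k⟩ → 0 as k → ∞. -/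
open MeasureTheory

noncomputable section

/-- The (relaxed) LiouvilleEq equation `⟨μ, ∇v·f⟩ = ⟨μ_T, v⟩ − ⟨μ0, v⟩` for all `C¹` test
functions `v`. -/
def LiouvilleEq {n m : ℕ}
    (f : EuclideanSpace ℝ (Fin n) × EuclideanSpace ℝ (Fin m) → EuclideanSpace ℝ (Fin n))
    (μ : Measure (EuclideanSpace ℝ (Fin n) × EuclideanSpace ℝ (Fin m)))
    (μT μ0 : Measure (EuclideanSpace ℝ (Fin n))) : Prop :=
  ∀ v : EuclideanSpace ℝ (Fin n) → ℝ, ContDiff ℝ 1 v →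
    ∫ p, fderiv ℝ v p.1 (f p) ∂μ = ∫ x, v x ∂μT - ∫ x, v x ∂μ0

/-- A pair `(μ, μT)` is feasible for the relaxed optimal control problem `ocp(l, μ0, T)`:
`μ` is a finite nonnegative measure supported on `X × U`, `μT` a finite nonnegative measure
supported on `X_T`, the LiouvilleEq equation holds, and the mass of `μ` is at most `T`. -/
def Feasible {n m : ℕ} (X : Set (EuclideanSpace ℝ (Fin n)))
    (U : Set (EuclideanSpace ℝ (Fin m))) (XT : Set (EuclideanSpace ℝ (Fin n)))
    (f : EuclideanSpace ℝ (Fin n) × EuclideanSpace ℝ (Fin m) → EuclideanSpace ℝ (Fin n))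
    (μ0 : Measure (EuclideanSpace ℝ (Fin n))) (T : ℝ)
    (μ : Measure (EuclideanSpace ℝ (Fin n) × EuclideanSpace ℝ (Fin m)))
    (μT : Measure (EuclideanSpace ℝ (Fin n))) : Prop :=
  IsFiniteMeasure μ ∧ μ ((X ×ˢ U)ᶜ) = 0 ∧
  IsFiniteMeasure μT ∧ μT (XTᶜ) = 0 ∧
  LiouvilleEq f μ μT μ0 ∧ μ Set.univ ≤ ENNReal.ofReal T


/-- Integrability of a function continuous on a compact set carrying all the mass. -/
lemma integrable_of_compact_carrier {α : Type*} [MeasurableSpace α] [TopologicalSpace α]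
    [OpensMeasurableSpace α] [T2Space α] [SecondCountableTopology α]
    {ρ : Measure α} [IsFiniteMeasure ρ] {s : Set α} (hs : IsCompact s) (hρ : ρ sᶜ = 0)
    {g : α → ℝ} (hg : ContinuousOn g s) : Integrable g ρ := by
  have hmem : ∀ᵐ x ∂ρ, x ∈ s := by
    rw [ae_iff]
    exact hρ
  have hrestr : ρ.restrict s = ρ := Measure.restrict_eq_self_of_ae_mem hmem
  have hmeas : AEStronglyMeasurable g ρ := by
    have := hg.aestronglyMeasurable (μ := ρ) hs.isClosed.measurableSet
    rwa [hrestr] at this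
  obtain ⟨C, hC⟩ := hs.exists_bound_of_continuousOn hg
  exact (integrable_const C).mono' hmeas (by filter_upwards [hmem] with x hx using hC x hx)

/-- Complementarity characterization of optimality: for a feasible pair
`(μ, μT)` and a dual-feasible sequence `(v_k, w_k)`, optimality of `(μ, μT)` together with
convergence of the dual values to the minimum, strong duality, and the complementarity
conditions are all equivalent. -/
theorem stmt_4 {n m : ℕ}
    (X : Set (EuclideanSpace ℝ (Fin n))) (U : Set (EuclideanSpace ℝ (Fin m)))
    (XT : Set (EuclideanSpace ℝ (Fin n)))
    (hX : IsCompact X) (hU : IsCompact U) (hXT : IsCompact XT) (hXTX : XT ⊆ X)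
    (f : EuclideanSpace ℝ (Fin n) × EuclideanSpace ℝ (Fin m) → EuclideanSpace ℝ (Fin n))
    (hf : Continuous f)
    (l : EuclideanSpace ℝ (Fin n) × EuclideanSpace ℝ (Fin m) → ℝ)
    (hl : ContinuousOn l (X ×ˢ U))
    (μ0 : Measure (EuclideanSpace ℝ (Fin n))) [IsFiniteMeasure μ0] (hμ0 : μ0 (Xᶜ) = 0)
    (TM : ℝ) (hTM : 0 < TM)
    (μ : Measure (EuclideanSpace ℝ (Fin n) × EuclideanSpace ℝ (Fin m)))
    (μT : Measure (EuclideanSpace ℝ (Fin n)))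
    (hpair : Feasible X U XT f μ0 TM μ μT)
    (v : ℕ → EuclideanSpace ℝ (Fin n) → ℝ) (w : ℕ → ℝ)
    (hv : ∀ k, ContDiff ℝ 1 (v k)) (hw : ∀ k, 0 ≤ w k)
    (hdual : ∀ k, ∀ p ∈ X ×ˢ U, 0 ≤ l p + w k + fderiv ℝ (v k) p.1 (f p))
    (hvT : ∀ k, ∀ x ∈ XT, v k x ≤ 0) :
    -- (i) ↔ (ii)
    ((((∀ ν νT, Feasible X U XT f μ0 TM ν νT → ∫ p, l p ∂μ ≤ ∫ p, l p ∂ν) ∧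
      Filter.Tendsto (fun k => (∫ x, v k x ∂μ0) - w k * TM) Filter.atTop
        (nhds (∫ p, l p ∂μ))) ↔
      Filter.Tendsto (fun k => (∫ x, v k x ∂μ0) - w k * TM) Filter.atTop
        (nhds (∫ p, l p ∂μ))) ∧
    -- (ii) ↔ (iii)
    (Filter.Tendsto (fun k => (∫ x, v k x ∂μ0) - w k * TM) Filter.atTop
        (nhds (∫ p, l p ∂μ)) ↔
      (Filter.Tendsto (fun k => w k * ((μ Set.univ).toReal - TM)) Filter.atTop (nhds 0) ∧
       Filter.Tendsto (fun k => ∫ p, (l p + w k + fderiv ℝ (v k) p.1 (f p)) ∂μ)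
         Filter.atTop (nhds 0) ∧
       Filter.Tendsto (fun k => ∫ x, v k x ∂μT) Filter.atTop (nhds 0)))) := by
  have hXU : IsCompact (X ×ˢ U) := hX.prod hU
  have hgc : ∀ k, Continuous (fun p : EuclideanSpace ℝ (Fin n) × EuclideanSpace ℝ (Fin m) =>
      fderiv ℝ (v k) p.1 (f p)) := fun k =>
    ((((hv k).continuous_fderiv one_ne_zero).comp continuous_fst).clm_apply hf)
  have key : ∀ ν νT, Feasible X U XT f μ0 TM ν νT → ∀ k,
      ((∫ p, l p ∂ν) - ((∫ x, v k x ∂μ0) - w k * TM)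
        = (∫ p, (l p + w k + fderiv ℝ (v k) p.1 (f p)) ∂ν)
          + w k * (TM - (ν Set.univ).toReal) + (- ∫ x, v k x ∂νT))
      ∧ 0 ≤ ∫ p, (l p + w k + fderiv ℝ (v k) p.1 (f p)) ∂ν
      ∧ 0 ≤ w k * (TM - (ν Set.univ).toReal)
      ∧ 0 ≤ - ∫ x, v k x ∂νT := by
    rintro ν νT ⟨hfin, hνc, hfinT, hνTc, hLiou, hmass⟩ k
    haveI := hfin; haveI := hfinT
    have hmemν : ∀ᵐ p ∂ν, p ∈ X ×ˢ U := by rw [ae_iff]; exact hνc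
    have hmemνT : ∀ᵐ x ∂νT, x ∈ XT := by rw [ae_iff]; exact hνTc
    have Il : Integrable l ν := integrable_of_compact_carrier hXU hνc hl
    have Ig : Integrable (fun p => fderiv ℝ (v k) p.1 (f p)) ν :=
      integrable_of_compact_carrier hXU hνc (hgc k).continuousOn
    have IvT : Integrable (v k) νT :=
      integrable_of_compact_carrier hXT hνTc (hv k).continuous.continuousOn
    have hM : (ν Set.univ).toReal ≤ TM := ENNReal.toReal_le_of_le_ofReal hTM.le hmass
    have hsum : ∫ p, (l p + w k + fderiv ℝ (v k) p.1 (f p)) ∂ν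
        = (∫ p, l p ∂ν) + (ν Set.univ).toReal * w k
          + ∫ p, fderiv ℝ (v k) p.1 (f p) ∂ν := by
      have e1 : ∫ p, (l p + w k + fderiv ℝ (v k) p.1 (f p)) ∂ν
          = (∫ p, (l p + w k) ∂ν) + ∫ p, fderiv ℝ (v k) p.1 (f p) ∂ν :=
        integral_add (Il.add (integrable_const _)) Ig
      have e2 : ∫ p, (l p + w k) ∂ν = (∫ p, l p ∂ν) + ∫ _p, (w k : ℝ) ∂ν :=
        integral_add Il (integrable_const _)
      rw [e1, e2, integral_const]
      simp only [smul_eq_mul, Measure.real]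
    have hL := hLiou (v k) (hv k)
    refine ⟨?_, ?_, ?_, ?_⟩
    · rw [hsum, hL]; ring
    · exact integral_nonneg_of_ae (by filter_upwards [hmemν] with p hp using hdual k p hp)
    · exact mul_nonneg (hw k) (sub_nonneg.2 hM)
    · exact neg_nonneg.2
        (integral_nonpos_of_ae (by filter_upwards [hmemνT] with x hx using hvT k x hx))
  have hkeyμ := fun k => key μ μT hpair k
  set L := ∫ p, l p ∂μ with hL
  set d := fun k => (∫ x, v k x ∂μ0) - w k * TM with hd
  set A := fun k => ∫ p, (l p + w k + fderiv ℝ (v k) p.1 (f p)) ∂μ with hA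
  set B := fun k => w k * (TM - (μ Set.univ).toReal) with hB
  set C := fun k => - ∫ x, v k x ∂μT with hC
  have hsum_eq : (fun k => L - d k) = fun k => A k + B k + C k := by
    funext k; exact (hkeyμ k).1
  have hii_iff_sum : Filter.Tendsto d Filter.atTop (nhds L) ↔
      Filter.Tendsto (fun k => A k + B k + C k) Filter.atTop (nhds 0) := by
    rw [← hsum_eq]
    constructor
    · intro h
      simpa using (tendsto_const_nhds (x := L)).sub h
    · intro h
      have := (tendsto_const_nhds (x := L)).sub h
      simpa using this
  constructor
  · constructor
    · exact And.right
    · intro hii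
      refine ⟨fun ν νT hfeas => ?_, hii⟩
      refine le_of_tendsto hii (Filter.Eventually.of_forall fun k => ?_)
      obtain ⟨heq, h1, h2, h3⟩ := key ν νT hfeas k
      simp only [hd]
      linarith
  · rw [hii_iff_sum]
    constructor
    · intro h
      have hAt : Filter.Tendsto A Filter.atTop (nhds 0) :=
        squeeze_zero (fun k => (hkeyμ k).2.1)
          (fun k => by simp only [hA, hB, hC]; have := (hkeyμ k).2.2.1; have := (hkeyμ k).2.2.2; linarith) h
      have hBt : Filter.Tendsto B Filter.atTop (nhds 0) :=
        squeeze_zero (fun k => (hkeyμ k).2.2.1)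
          (fun k => by simp only [hA, hB, hC]; have := (hkeyμ k).2.1; have := (hkeyμ k).2.2.2; linarith) h
      have hCt : Filter.Tendsto C Filter.atTop (nhds 0) :=
        squeeze_zero (fun k => (hkeyμ k).2.2.2)
          (fun k => by simp only [hA, hB, hC]; have := (hkeyμ k).2.1; have := (hkeyμ k).2.2.1; linarith) h
      refine ⟨?_, hAt, ?_⟩
      · have hfun : (fun k => w k * ((μ Set.univ).toReal - TM)) = fun k => -(B k) := by
          funext k; simp only [hB]; ring
        rw [hfun]
        simpa using hBt.neg
      · have hfun : (fun k => ∫ x, v k x ∂μT) = fun k => -(C k) := by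
          funext k; simp [hC]
        rw [hfun]
        simpa using hCt.neg
    · rintro ⟨h1, h2, h3⟩
      have hBt : Filter.Tendsto B Filter.atTop (nhds 0) := by
        have hfun : B = fun k => -(w k * ((μ Set.univ).toReal - TM)) := by
          funext k; simp only [hB]; ring
        rw [hfun]; simpa using h1.neg
      have hCt : Filter.Tendsto C Filter.atTop (nhds 0) := by
        have hfun : C = fun k => -(∫ x, v k x ∂μT) := rfl
        rw [hfun]; simpa using h3.neg
      have := (h2.add hBt).add hCt
      simpa using this
end
end

section
/- For every μ ∈ M_+(X×U) and μ_T ∈ M_+(X_T), the set IOCP(μ,μ_T) is a convex cone (it contains 0, is closed under addition, and is closed under multiplication by nonnegative scalars) which is closed with respect to the supremum norm on the space of continuous functions on X×U. -/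
open MeasureTheory

noncomputable section

/-- `l ∈ IOCP_ε(μ, μT)`: there is a `C¹` certificate `v` with
`⟨μ, l + ∇v·f⟩ ≤ ε`, `l + ∇v·f + ε ≥ 0` on `X × U`, `⟨μT, v⟩ ≥ −ε` and `v ≤ 0` on `X_T`. -/
def IOCPe {n m : ℕ} (X : Set (EuclideanSpace ℝ (Fin n)))
    (U : Set (EuclideanSpace ℝ (Fin m))) (XT : Set (EuclideanSpace ℝ (Fin n)))
    (f : EuclideanSpace ℝ (Fin n) × EuclideanSpace ℝ (Fin m) → EuclideanSpace ℝ (Fin n))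
    (μ : Measure (EuclideanSpace ℝ (Fin n) × EuclideanSpace ℝ (Fin m)))
    (μT : Measure (EuclideanSpace ℝ (Fin n)))
    (ε : ℝ) (l : EuclideanSpace ℝ (Fin n) × EuclideanSpace ℝ (Fin m) → ℝ) : Prop :=
  ∃ v : EuclideanSpace ℝ (Fin n) → ℝ, ContDiff ℝ 1 v ∧
    (∫ p, (l p + fderiv ℝ v p.1 (f p)) ∂μ) ≤ ε ∧
    (∀ p ∈ X ×ˢ U, 0 ≤ l p + fderiv ℝ v p.1 (f p) + ε) ∧
    (-ε ≤ ∫ x, v x ∂μT) ∧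
    (∀ x ∈ XT, v x ≤ 0)

/-- The set of solutions of the inverse optimal control problem: continuous Lagrangians
belonging to `IOCP_ε(μ, μT)` for every `ε > 0`. -/
def IOCP {n m : ℕ} (X : Set (EuclideanSpace ℝ (Fin n)))
    (U : Set (EuclideanSpace ℝ (Fin m))) (XT : Set (EuclideanSpace ℝ (Fin n)))
    (f : EuclideanSpace ℝ (Fin n) × EuclideanSpace ℝ (Fin m) → EuclideanSpace ℝ (Fin n))
    (μ : Measure (EuclideanSpace ℝ (Fin n) × EuclideanSpace ℝ (Fin m)))
    (μT : Measure (EuclideanSpace ℝ (Fin n))) :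
    Set (EuclideanSpace ℝ (Fin n) × EuclideanSpace ℝ (Fin m) → ℝ) :=
  {l | ContinuousOn l (X ×ˢ U) ∧ ∀ ε : ℝ, 0 < ε → IOCPe X U XT f μ μT ε l}

lemma aux_integrable {α : Type*} [MeasurableSpace α] [TopologicalSpace α]
    [T2Space α] [OpensMeasurableSpace α]
    (μ : MeasureTheory.Measure α) [MeasureTheory.IsFiniteMeasure μ] {s : Set α}
    (hs : IsCompact s) (hμ : μ sᶜ = 0) {g : α → ℝ} (hg : ContinuousOn g s) :
    MeasureTheory.Integrable g μ := by
  have hms : MeasurableSet s := hs.isClosed.measurableSet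
  have hae : ∀ᵐ x ∂μ, x ∈ s := by
    rw [Filter.eventually_iff, MeasureTheory.mem_ae_iff]
    simpa using hμ
  have hres : μ.restrict s = μ := MeasureTheory.Measure.restrict_eq_self_of_ae_mem hae
  obtain ⟨C, hC⟩ := hs.exists_bound_of_continuousOn hg
  refine ⟨hres ▸ hg.aestronglyMeasurable hms, ?_⟩
  exact MeasureTheory.HasFiniteIntegral.of_bounded (C := C) (hae.mono fun x hx => hC x hx)

/-- `IOCP(μ, μT)` is a convex cone (contains `0`, closed under addition
and under multiplication by nonnegative scalars), closed with respect to the supremum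
norm on `X × U` (uniform convergence on `X × U`). -/
theorem stmt_5 {n m : ℕ}
    (X : Set (EuclideanSpace ℝ (Fin n))) (U : Set (EuclideanSpace ℝ (Fin m)))
    (XT : Set (EuclideanSpace ℝ (Fin n)))
    (hX : IsCompact X) (hU : IsCompact U) (hXT : IsCompact XT) (hXTX : XT ⊆ X)
    (f : EuclideanSpace ℝ (Fin n) × EuclideanSpace ℝ (Fin m) → EuclideanSpace ℝ (Fin n))
    (hf : Continuous f)
    (μ : Measure (EuclideanSpace ℝ (Fin n) × EuclideanSpace ℝ (Fin m)))
    [IsFiniteMeasure μ] (hμs : μ ((X ×ˢ U)ᶜ) = 0)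
    (μT : Measure (EuclideanSpace ℝ (Fin n))) [IsFiniteMeasure μT] (hμTs : μT (XTᶜ) = 0) :
    (0 ∈ IOCP X U XT f μ μT) ∧
    (∀ l₁ l₂, l₁ ∈ IOCP X U XT f μ μT → l₂ ∈ IOCP X U XT f μ μT →
      l₁ + l₂ ∈ IOCP X U XT f μ μT) ∧
    (∀ (c : ℝ) l, 0 ≤ c → l ∈ IOCP X U XT f μ μT → c • l ∈ IOCP X U XT f μ μT) ∧
    (∀ (lk : ℕ → EuclideanSpace ℝ (Fin n) × EuclideanSpace ℝ (Fin m) → ℝ)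
       (l : EuclideanSpace ℝ (Fin n) × EuclideanSpace ℝ (Fin m) → ℝ),
      (∀ k, lk k ∈ IOCP X U XT f μ μT) → ContinuousOn l (X ×ˢ U) →
      TendstoUniformlyOn lk l Filter.atTop (X ×ˢ U) →
      l ∈ IOCP X U XT f μ μT) := by
  have hXU : IsCompact (X ×ˢ U) := hX.prod hU
  -- continuity of p ↦ fderiv v p.1 (f p)
  have contD : ∀ (v : EuclideanSpace ℝ (Fin n) → ℝ), ContDiff ℝ 1 v →
      Continuous fun p : EuclideanSpace ℝ (Fin n) × EuclideanSpace ℝ (Fin m) =>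
        fderiv ℝ v p.1 (f p) := fun v hv =>
    Continuous.clm_apply ((hv.continuous_fderiv one_ne_zero).comp continuous_fst) hf
  have intg : ∀ (l : EuclideanSpace ℝ (Fin n) × EuclideanSpace ℝ (Fin m) → ℝ),
      ContinuousOn l (X ×ˢ U) → ∀ (v : EuclideanSpace ℝ (Fin n) → ℝ), ContDiff ℝ 1 v →
      Integrable (fun p => l p + fderiv ℝ v p.1 (f p)) μ := fun l hl v hv =>
    aux_integrable μ hXU hμs (hl.add (contD v hv).continuousOn)
  have intv : ∀ (v : EuclideanSpace ℝ (Fin n) → ℝ), ContDiff ℝ 1 v →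
      Integrable v μT := fun v hv =>
    aux_integrable μT hXT hμTs hv.continuous.continuousOn
  refine ⟨?_, ?_, ?_, ?_⟩
  · -- zero
    have hfz : fderiv ℝ (0 : EuclideanSpace ℝ (Fin n) → ℝ) = 0 := by
      funext x
      rw [show (0 : EuclideanSpace ℝ (Fin n) → ℝ) = fun _ => (0:ℝ) from rfl, fderiv_fun_const]
    refine ⟨continuousOn_const, fun ε hε => ⟨0, contDiff_const, ?_, ?_, ?_, ?_⟩⟩
    · simp [hfz]; linarith
    · intro p _; simp [hfz]; linarith
    · simp; linarith
    · intro x _; simp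
  · -- addition
    rintro l₁ l₂ ⟨hc₁, h₁⟩ ⟨hc₂, h₂⟩
    refine ⟨hc₁.add hc₂, fun ε hε => ?_⟩
    obtain ⟨v₁, hv₁, hi₁, hp₁, hT₁, hN₁⟩ := h₁ (ε / 2) (half_pos hε)
    obtain ⟨v₂, hv₂, hi₂, hp₂, hT₂, hN₂⟩ := h₂ (ε / 2) (half_pos hε)
    have hd₁ : Differentiable ℝ v₁ := hv₁.differentiable one_ne_zero
    have hd₂ : Differentiable ℝ v₂ := hv₂.differentiable one_ne_zero
    refine ⟨fun x => v₁ x + v₂ x, hv₁.add hv₂, ?_, ?_, ?_, ?_⟩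
    · have hD : ∀ p : EuclideanSpace ℝ (Fin n) × EuclideanSpace ℝ (Fin m),
          ((l₁ + l₂) p + fderiv ℝ (fun x => v₁ x + v₂ x) p.1 (f p)) =
          (l₁ p + fderiv ℝ v₁ p.1 (f p)) + (l₂ p + fderiv ℝ v₂ p.1 (f p)) := by
        intro p
        rw [fderiv_fun_add (hd₁ p.1) (hd₂ p.1)]
        simp; ring
      calc (∫ p, ((l₁ + l₂) p + fderiv ℝ (fun x => v₁ x + v₂ x) p.1 (f p)) ∂μ)
          = ∫ p, ((l₁ p + fderiv ℝ v₁ p.1 (f p)) + (l₂ p + fderiv ℝ v₂ p.1 (f p))) ∂μ := by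
            simp_rw [hD]
        _ = (∫ p, (l₁ p + fderiv ℝ v₁ p.1 (f p)) ∂μ)
            + ∫ p, (l₂ p + fderiv ℝ v₂ p.1 (f p)) ∂μ :=
            integral_add (intg l₁ hc₁ v₁ hv₁) (intg l₂ hc₂ v₂ hv₂)
        _ ≤ ε / 2 + ε / 2 := add_le_add hi₁ hi₂
        _ = ε := add_halves ε
    · intro p hp
      have := hp₁ p hp
      have := hp₂ p hp
      rw [fderiv_fun_add (hd₁ p.1) (hd₂ p.1)]
      simp only [Pi.add_apply, ContinuousLinearMap.add_apply] at *
      linarith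
    · calc -ε = -(ε/2) + -(ε/2) := by ring
        _ ≤ (∫ x, v₁ x ∂μT) + ∫ x, v₂ x ∂μT := add_le_add hT₁ hT₂
        _ = ∫ x, (v₁ x + v₂ x) ∂μT := (integral_add (intv v₁ hv₁) (intv v₂ hv₂)).symm
    · intro x hx
      have := hN₁ x hx; have := hN₂ x hx
      show v₁ x + v₂ x ≤ 0
      linarith
  · -- scalar
    rintro c l hc ⟨hcl, hl⟩
    rcases eq_or_lt_of_le hc with rfl | hcpos
    · constructor
      · rw [zero_smul]; exact (continuousOn_const : ContinuousOn
          (fun _ : EuclideanSpace ℝ (Fin n) × EuclideanSpace ℝ (Fin m) => (0:ℝ)) (X ×ˢ U))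
      · intro ε hε
        have hfz : fderiv ℝ (0 : EuclideanSpace ℝ (Fin n) → ℝ) = 0 := by
          funext x
          rw [show (0 : EuclideanSpace ℝ (Fin n) → ℝ) = fun _ => (0:ℝ) from rfl, fderiv_fun_const]
        refine ⟨0, contDiff_const, ?_, ?_, ?_, ?_⟩
        · simp [hfz]; linarith
        · intro p _; simp [hfz]; linarith
        · simp; linarith
        · intro x _; simp
    · refine ⟨hcl.const_smul c, fun ε hε => ?_⟩
      obtain ⟨v, hv, hi, hp, hT, hN⟩ := hl (ε / c) (div_pos hε hcpos)
      have hd : Differentiable ℝ v := hv.differentiable one_ne_zero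
      have hDc : ∀ y, fderiv ℝ (fun x => c * v x) y = c • fderiv ℝ v y := fun y =>
        fderiv_const_mul (hd y) c
      refine ⟨fun x => c * v x, contDiff_const.mul hv, ?_, ?_, ?_, ?_⟩
      · have hD : ∀ p : EuclideanSpace ℝ (Fin n) × EuclideanSpace ℝ (Fin m),
            ((c • l) p + fderiv ℝ (fun x => c * v x) p.1 (f p)) =
            c * (l p + fderiv ℝ v p.1 (f p)) := by
          intro p; rw [hDc]; simp; ring
        calc (∫ p, ((c • l) p + fderiv ℝ (fun x => c * v x) p.1 (f p)) ∂μ)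
            = ∫ p, c * (l p + fderiv ℝ v p.1 (f p)) ∂μ := by simp_rw [hD]
          _ = c * ∫ p, (l p + fderiv ℝ v p.1 (f p)) ∂μ := integral_const_mul c _
          _ ≤ c * (ε / c) := by
              exact mul_le_mul_of_nonneg_left hi hc
          _ = ε := by rw [mul_comm, div_mul_cancel₀ _ (ne_of_gt hcpos)]
      · intro p hpm
        have h0 := hp p hpm
        have : 0 ≤ c * (l p + fderiv ℝ v p.1 (f p) + ε / c) := mul_nonneg hc h0
        have hce : c * (ε / c) = ε := by
          rw [mul_comm, div_mul_cancel₀ _ (ne_of_gt hcpos)]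
        rw [hDc]
        simp only [Pi.smul_apply, smul_eq_mul, ContinuousLinearMap.coe_smul',
          Pi.smul_apply]
        nlinarith
      · calc -ε = c * (-(ε / c)) := by
              rw [mul_neg, mul_comm, div_mul_cancel₀ _ (ne_of_gt hcpos)]
          _ ≤ c * ∫ x, v x ∂μT := mul_le_mul_of_nonneg_left hT hc
          _ = ∫ x, c * v x ∂μT := (integral_const_mul c _).symm
      · intro x hx
        exact mul_nonpos_of_nonneg_of_nonpos hc (hN x hx)
  · -- closedness
    intro lk l hlk hlc hconv
    refine ⟨hlc, fun ε hε => ?_⟩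
    set M : ℝ := (μ Set.univ).toReal with hM
    have hM0 : 0 ≤ M := ENNReal.toReal_nonneg
    set δ : ℝ := ε / (2 * (M + 1)) with hδ
    have hδpos : 0 < δ := by positivity
    have hδle : δ ≤ ε / 2 := by
      rw [hδ, div_le_div_iff₀ (by positivity) (by norm_num)]
      nlinarith
    have hδM : δ * M ≤ ε / 2 := by
      have : δ * M ≤ δ * (M + 1) := by nlinarith
      have h2 : δ * (M + 1) = ε / 2 := by rw [hδ]; field_simp
      linarith [this, h2.le]
    obtain ⟨k, hk⟩ := ((Metric.tendstoUniformlyOn_iff.mp hconv) δ hδpos).exists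
    obtain ⟨v, hv, hi, hp, hT, hN⟩ := (hlk k).2 (ε / 2) (half_pos hε)
    have hdist : ∀ p ∈ X ×ˢ U, |l p - lk k p| ≤ δ := by
      intro p hpm
      have := hk p hpm
      rw [Real.dist_eq] at this
      exact this.le
    refine ⟨v, hv, ?_, ?_, hT.trans' (by linarith), hN⟩
    · have hint1 : Integrable (fun p => lk k p + fderiv ℝ v p.1 (f p)) μ :=
        intg (lk k) (hlk k).1 v hv
      have hint2 : Integrable (fun p => l p - lk k p) μ :=
        aux_integrable μ hXU hμs (hlc.sub (hlk k).1)
      have hsplit : (∫ p, (l p + fderiv ℝ v p.1 (f p)) ∂μ) =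
          (∫ p, (lk k p + fderiv ℝ v p.1 (f p)) ∂μ) + ∫ p, (l p - lk k p) ∂μ := by
        rw [← integral_add hint1 hint2]
        congr 1; funext p; ring
      have hae : ∀ᵐ p ∂μ, p ∈ X ×ˢ U := by
        rw [Filter.eventually_iff, mem_ae_iff]; exact hμs
      have hbnd : |∫ p, (l p - lk k p) ∂μ| ≤ δ * M := by
        have := norm_integral_le_of_norm_le_const (μ := μ)
          (f := fun p => l p - lk k p) (C := δ)
          (hae.mono fun p hpm => by simpa using hdist p hpm)
        simpa [hM, measureReal_def] using this
      have := abs_le.mp hbnd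
      rw [hsplit]
      linarith
    · intro p hpm
      have h0 := hp p hpm
      have h1 := abs_le.mp (hdist p hpm)
      linarith
end
end

section
/- Let μ ∈ M_+(X×U), μ_T ∈ M_+(X_T) and μ0 ∈ M_+(X) satisfy the Liouville equation ⟨μ, ∇v·f⟩ = ⟨μ_T, v⟩ − ⟨μ0, v⟩ for every v ∈ C¹(X). If l ∈ IOCP(μ,μ_T), then for every T > μ(X×U) the pair (μ,μ_T) minimizes ⟨ν,l⟩ over all pairs (ν,ν_T) with ν ∈ M_+(X×U), ν_T ∈ M_+(X_T) satisfying the Liouville equation with the same μ0 and ν(X×U) ≤ T. -/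
open MeasureTheory

noncomputable section

private lemma integ_help {α : Type*} [MeasurableSpace α] [TopologicalSpace α]
    [OpensMeasurableSpace α] [T2Space α] {K : Set α} (hK : IsCompact K)
    {μ : Measure α} [IsFiniteMeasure μ] (hμ : μ Kᶜ = 0) {g : α → ℝ}
    (hg : ContinuousOn g K) : Integrable g μ := by
  have h1 : μ.restrict K = μ :=
    Measure.restrict_eq_self_of_ae_mem (by rw [MeasureTheory.ae_iff]; exact hμ)
  rw [← h1]
  exact ContinuousOn.integrableOn_compact hK hg

/-- If `l ∈ IOCP(μ, μT)` and `(μ, μT, μ0)` satisfies the Liouville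
equation, then for every `T > μ(X×U)` the pair `(μ, μT)` minimizes `⟨ν, l⟩` over all pairs
`(ν, νT)` satisfying the Liouville equation with the same `μ0` and `ν(X×U) ≤ T`. -/
theorem stmt_6 {n m : ℕ}
    (X : Set (EuclideanSpace ℝ (Fin n))) (U : Set (EuclideanSpace ℝ (Fin m)))
    (XT : Set (EuclideanSpace ℝ (Fin n)))
    (hX : IsCompact X) (hU : IsCompact U) (hXT : IsCompact XT) (hXTX : XT ⊆ X)
    (f : EuclideanSpace ℝ (Fin n) × EuclideanSpace ℝ (Fin m) → EuclideanSpace ℝ (Fin n))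
    (hf : Continuous f)
    (μ : Measure (EuclideanSpace ℝ (Fin n) × EuclideanSpace ℝ (Fin m)))
    [IsFiniteMeasure μ] (hμs : μ ((X ×ˢ U)ᶜ) = 0)
    (μT : Measure (EuclideanSpace ℝ (Fin n))) [IsFiniteMeasure μT] (hμTs : μT (XTᶜ) = 0)
    (μ0 : Measure (EuclideanSpace ℝ (Fin n))) [IsFiniteMeasure μ0] (hμ0s : μ0 (Xᶜ) = 0)
    (hLiou : ∀ v : EuclideanSpace ℝ (Fin n) → ℝ, ContDiff ℝ 1 v →
      ∫ p, fderiv ℝ v p.1 (f p) ∂μ = ∫ x, v x ∂μT - ∫ x, v x ∂μ0)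
    (l : EuclideanSpace ℝ (Fin n) × EuclideanSpace ℝ (Fin m) → ℝ)
    (hl : l ∈ IOCP X U XT f μ μT) :
    ∀ T : ℝ, (μ Set.univ).toReal < T →
      ∀ (ν : Measure (EuclideanSpace ℝ (Fin n) × EuclideanSpace ℝ (Fin m)))
        (νT : Measure (EuclideanSpace ℝ (Fin n))),
        IsFiniteMeasure ν → ν ((X ×ˢ U)ᶜ) = 0 →
        IsFiniteMeasure νT → νT (XTᶜ) = 0 →
        (∀ v : EuclideanSpace ℝ (Fin n) → ℝ, ContDiff ℝ 1 v →
          ∫ p, fderiv ℝ v p.1 (f p) ∂ν = ∫ x, v x ∂νT - ∫ x, v x ∂μ0) →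
        ν Set.univ ≤ ENNReal.ofReal T →
        ∫ p, l p ∂μ ≤ ∫ p, l p ∂ν := by
  intro T hT ν νT hνfin hνs hνTfin hνTs hLiouν hνtot
  haveI := hνfin; haveI := hνTfin
  have hT0 : 0 < T := lt_of_le_of_lt ENNReal.toReal_nonneg hT
  have hνT_le : (ν Set.univ).toReal ≤ T := ENNReal.toReal_le_of_le_ofReal hT0.le hνtot
  apply le_of_forall_pos_le_add
  intro ε' hε'
  set ε : ℝ := ε' / (2 + T) with hεdef
  have h2T : (0:ℝ) < 2 + T := by linarith
  have hε : 0 < ε := div_pos hε' h2T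
  obtain ⟨v, hv, h1, h2, h3, h4⟩ := hl.2 ε hε
  set g : EuclideanSpace ℝ (Fin n) × EuclideanSpace ℝ (Fin m) → ℝ :=
    fun p => fderiv ℝ v p.1 (f p) with hgdef
  have hgc : Continuous g :=
    ((hv.continuous_fderiv one_ne_zero).comp continuous_fst).clm_apply hf
  have hKc : IsCompact (X ×ˢ U) := hX.prod hU
  have hlμ : Integrable l μ := integ_help hKc hμs hl.1
  have hlν : Integrable l ν := integ_help hKc hνs hl.1
  have hgμ : Integrable g μ := integ_help hKc hμs hgc.continuousOn
  have hgν : Integrable g ν := integ_help hKc hνs hgc.continuousOn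
  rw [integral_add hlμ hgμ] at h1
  have hLμ : ∫ p, g p ∂μ = ∫ x, v x ∂μT - ∫ x, v x ∂μ0 := hLiou v hv
  have hLν : ∫ p, g p ∂ν = ∫ x, v x ∂νT - ∫ x, v x ∂μ0 := hLiouν v hv
  -- νT side: v ≤ 0 a.e.
  have hvνT : ∫ x, v x ∂νT ≤ 0 := by
    apply integral_nonpos_of_ae
    have hmem : ∀ᵐ x ∂νT, x ∈ XT := by rw [MeasureTheory.ae_iff]; exact hνTs
    filter_upwards [hmem] with x hx using h4 x hx
  -- ν side: nonnegativity
  have hmemν : ∀ᵐ p ∂ν, p ∈ X ×ˢ U := by rw [MeasureTheory.ae_iff]; exact hνs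
  have hnn : 0 ≤ ∫ p, (l p + g p + ε) ∂ν := by
    apply integral_nonneg_of_ae
    filter_upwards [hmemν] with p hp using h2 p hp
  have hsum : ∫ p, (l p + g p + ε) ∂ν
      = ∫ p, l p ∂ν + ∫ p, g p ∂ν + (ν Set.univ).toReal * ε := by
    have hadd : Integrable (fun p => l p + g p) ν := hlν.add hgν
    rw [integral_add hadd (integrable_const ε), integral_add hlν hgν,
      integral_const, smul_eq_mul]
    rfl
  rw [hsum] at hnn
  have hεmul : (ν Set.univ).toReal * ε ≤ T * ε :=
    mul_le_mul_of_nonneg_right hνT_le hε.le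
  have hεval : (2 + T) * ε = ε' := by
    rw [hεdef, mul_comm, div_mul_cancel₀ _ (ne_of_gt h2T)]
  linarith
end
end

section
/- Let μ¹, μ² ∈ M_+(X×U) and μ¹_T, μ²_T ∈ M_+(X_T), and set μ := μ¹ + μ² and μ_T := μ¹_T + μ²_T. Then IOCP(μ,μ_T) ⊆ IOCP(μ¹,μ¹_T). In particular, enlarging the occupation measure (e.g. by adding more trajectories) shrinks the set of solutions to the inverse problem. -/
open MeasureTheory

noncomputable section

/-- Monotonicity with respect to the occupation measure:
`IOCP(μ¹ + μ², μ¹_T + μ²_T) ⊆ IOCP(μ¹, μ¹_T)`. -/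
theorem stmt_13 {n m : ℕ}
    (X : Set (EuclideanSpace ℝ (Fin n))) (U : Set (EuclideanSpace ℝ (Fin m)))
    (XT : Set (EuclideanSpace ℝ (Fin n)))
    (hX : IsCompact X) (hU : IsCompact U) (hXT : IsCompact XT) (hXTX : XT ⊆ X)
    (f : EuclideanSpace ℝ (Fin n) × EuclideanSpace ℝ (Fin m) → EuclideanSpace ℝ (Fin n))
    (hf : Continuous f)
    (μ1 μ2 : Measure (EuclideanSpace ℝ (Fin n) × EuclideanSpace ℝ (Fin m)))
    [IsFiniteMeasure μ1] [IsFiniteMeasure μ2]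
    (hμ1s : μ1 ((X ×ˢ U)ᶜ) = 0) (hμ2s : μ2 ((X ×ˢ U)ᶜ) = 0)
    (μT1 μT2 : Measure (EuclideanSpace ℝ (Fin n)))
    [IsFiniteMeasure μT1] [IsFiniteMeasure μT2]
    (hμT1s : μT1 (XTᶜ) = 0) (hμT2s : μT2 (XTᶜ) = 0) :
    IOCP X U XT f (μ1 + μ2) (μT1 + μT2) ⊆ IOCP X U XT f μ1 μT1 := by
  rintro l ⟨hl, hIO⟩
  refine ⟨hl, fun ε hε0 => ?_⟩
  set c : ℝ := (μ2 Set.univ).toReal with hc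
  have hc0 : 0 ≤ c := ENNReal.toReal_nonneg
  have h1c : (0:ℝ) < 1 + c := by linarith
  set ε' : ℝ := ε / (1 + c) with hε'
  have hε'0 : 0 < ε' := div_pos hε0 h1c
  have hε'mul : ε' * (1 + c) = ε := div_mul_cancel₀ ε (ne_of_gt h1c)
  have hε'ε : ε' ≤ ε := by nlinarith
  obtain ⟨v, hv, hint, hpt, hT, hvT⟩ := hIO ε' hε'0
  refine ⟨v, hv, ?_, fun p hp => by linarith [hpt p hp], ?_, hvT⟩
  · -- integral bound
    set g : EuclideanSpace ℝ (Fin n) × EuclideanSpace ℝ (Fin m) → ℝ :=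
      fun p => l p + fderiv ℝ v p.1 (f p) with hg
    have hw : Continuous fun p : EuclideanSpace ℝ (Fin n) × EuclideanSpace ℝ (Fin m) =>
        fderiv ℝ v p.1 (f p) :=
      Continuous.clm_apply ((hv.continuous_fderiv one_ne_zero).comp continuous_fst) hf
    have hgcont : ContinuousOn g (X ×ˢ U) := hl.add hw.continuousOn
    have hXU : IsCompact (X ×ˢ U) := hX.prod hU
    have hmem1 : ∀ᵐ p ∂μ1, p ∈ X ×ˢ U := by
      rw [MeasureTheory.ae_iff]; exact hμ1s
    have hmem2 : ∀ᵐ p ∂μ2, p ∈ X ×ˢ U := by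
      rw [MeasureTheory.ae_iff]; exact hμ2s
    have hres1 : μ1.restrict (X ×ˢ U) = μ1 :=
      Measure.restrict_eq_self_of_ae_mem hmem1
    have hres2 : μ2.restrict (X ×ˢ U) = μ2 :=
      Measure.restrict_eq_self_of_ae_mem hmem2
    have hint1 : Integrable g μ1 := by
      rw [← hres1]; exact hgcont.integrableOn_compact hXU
    have hint2 : Integrable g μ2 := by
      rw [← hres2]; exact hgcont.integrableOn_compact hXU
    have hsplit : (∫ p, g p ∂(μ1 + μ2)) = (∫ p, g p ∂μ1) + ∫ p, g p ∂μ2 :=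
      integral_add_measure hint1 hint2
    have hlow : ∀ᵐ p ∂μ2, -ε' ≤ g p := by
      filter_upwards [hmem2] with p hp
      have := hpt p hp
      simp only [hg]
      linarith
    have h2 : c * (-ε') ≤ ∫ p, g p ∂μ2 := by
      have := integral_mono_ae (integrable_const (-ε')) hint2 hlow
      simpa [smul_eq_mul, measureReal_def, hc] using this
    have htot : (∫ p, g p ∂(μ1 + μ2)) ≤ ε' := hint
    rw [hsplit] at htot
    calc (∫ p, g p ∂μ1) ≤ ε' - c * (-ε') := by linarith
      _ = ε' * (1 + c) := by ring
      _ = ε := hε'mul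
  · -- terminal measure bound
    have hmemT1 : ∀ᵐ x ∂μT1, x ∈ XT := by
      rw [MeasureTheory.ae_iff]; exact hμT1s
    have hmemT2 : ∀ᵐ x ∂μT2, x ∈ XT := by
      rw [MeasureTheory.ae_iff]; exact hμT2s
    have hresT1 : μT1.restrict XT = μT1 := Measure.restrict_eq_self_of_ae_mem hmemT1
    have hresT2 : μT2.restrict XT = μT2 := Measure.restrict_eq_self_of_ae_mem hmemT2
    have hintT1 : Integrable v μT1 := by
      rw [← hresT1]; exact hv.continuous.continuousOn.integrableOn_compact hXT
    have hintT2 : Integrable v μT2 := by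
      rw [← hresT2]; exact hv.continuous.continuousOn.integrableOn_compact hXT
    have hsplitT : (∫ x, v x ∂(μT1 + μT2)) = (∫ x, v x ∂μT1) + ∫ x, v x ∂μT2 :=
      integral_add_measure hintT1 hintT2
    have h2T : (∫ x, v x ∂μT2) ≤ 0 := by
      apply integral_nonpos_of_ae
      filter_upwards [hmemT2] with x hx using hvT x hx
    rw [hsplitT] at hT
    linarith
end
end

section
/- In the one-dimensional setting X = [−1,1], U = [−1,1], X_T = {0}, f(x,u) = u, with μ_T = δ_0 the Dirac measure at 0, let α > 2 and consider the Lagrangian l_α(x,u) = 1 + (α/2)u². If μ ∈ M_+(X×U) and l_α ∈ IOCP(μ,δ_0), then |u| = √(2/α) for μ-almost every (x,u) ∈ X×U. -/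
open MeasureTheory

noncomputable section

/-- `l ∈ IOCP_ε(μ, μT)` for the one-dimensional problem with `X = U = [−1,1]`,
`X_T = {0}` and dynamics `f(x,u) = u`:  there is a `C¹` certificate `v` with
`⟨μ, l + v'·u⟩ ≤ ε`, `l(x,u) + v'(x)·u + ε ≥ 0` on `X × U`, `⟨μT, v⟩ ≥ −ε` and
`v ≤ 0` on `X_T = {0}`. -/
def IOCPe1 (μ : Measure (ℝ × ℝ)) (μT : Measure ℝ) (ε : ℝ) (l : ℝ × ℝ → ℝ) : Prop :=
  ∃ v : ℝ → ℝ, ContDiff ℝ 1 v ∧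
    (∫ p, (l p + deriv v p.1 * p.2) ∂μ) ≤ ε ∧
    (∀ p ∈ (Set.Icc (-1:ℝ) 1) ×ˢ (Set.Icc (-1:ℝ) 1), 0 ≤ l p + deriv v p.1 * p.2 + ε) ∧
    (-ε ≤ ∫ x, v x ∂μT) ∧
    (∀ x ∈ ({0} : Set ℝ), v x ≤ 0)

set_option maxHeartbeats 1000000 in
/-- In the one-dimensional example with `X = U = [−1,1]`, `X_T = {0}`,
`f(x,u) = u` and `μ_T = δ₀`: if `α > 2` and `l_α(x,u) = 1 + (α/2)u²` belongs to
`IOCP(μ, δ₀)`, then `|u| = √(2/α)` for `μ`-almost every `(x,u)`. -/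
theorem stmt_14 (α : ℝ) (hα : 2 < α)
    (μ : Measure (ℝ × ℝ)) [IsFiniteMeasure μ]
    (hμs : μ (((Set.Icc (-1:ℝ) 1) ×ˢ (Set.Icc (-1:ℝ) 1))ᶜ) = 0)
    (hl : ∀ ε : ℝ, 0 < ε →
      IOCPe1 μ (Measure.dirac 0) ε (fun p => 1 + α / 2 * p.2 ^ 2)) :
    ∀ᵐ p ∂μ, |p.2| = Real.sqrt (2 / α) := by
  set S := (Set.Icc (-1:ℝ) 1) ×ˢ (Set.Icc (-1:ℝ) 1) with hS
  have hae : ∀ᵐ p ∂μ, p ∈ S := by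
    rw [ae_iff]
    simpa [Set.compl_def] using hμs
  have hα0 : (0:ℝ) < α := by linarith
  have hα2 : (0:ℝ) ≤ α / 2 := by linarith
  set s : ℝ := Real.sqrt (α / 2) with hs_def
  have hs2 : s ^ 2 = α / 2 := Real.sq_sqrt hα2
  have hs0 : 0 ≤ s := Real.sqrt_nonneg _
  set F : ℝ × ℝ → ℝ := fun p => (s * |p.2| - 1) ^ 2 with hF_def
  have hFcont : Continuous F := by
    apply Continuous.pow
    exact (continuous_const.mul (continuous_abs.comp continuous_snd)).sub continuous_const
  set M : ℝ := (μ Set.univ).toReal with hM_def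
  have hM0 : 0 ≤ M := ENNReal.toReal_nonneg
  have hFint : Integrable F μ := by
    refine Integrable.mono' (integrable_const ((s + 1)^2)) hFcont.aestronglyMeasurable ?_
    filter_upwards [hae] with p hp
    have hu : |p.2| ≤ 1 := abs_le.2 ⟨hp.2.1, hp.2.2⟩
    have ha0 : 0 ≤ |p.2| := abs_nonneg _
    have : |F p| = (s * |p.2| - 1)^2 := abs_of_nonneg (sq_nonneg _)
    rw [Real.norm_eq_abs, this]
    have hts : s * |p.2| ≤ s := mul_le_of_le_one_right hs0 hu
    have ht0 : 0 ≤ s * |p.2| := mul_nonneg hs0 ha0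
    nlinarith
  set C : ℝ := 1 + M + 2 * s * M with hC_def
  have hC0 : 0 ≤ C := by positivity
  -- key estimate
  have key : ∀ ε : ℝ, 0 < ε → ε ≤ α / 2 - 1 → (∫ p, F p ∂μ) ≤ ε * C := by
    intro ε hε hε'
    obtain ⟨v, hv, hint, hpt, -, -⟩ := hl ε hε
    have hdc : Continuous (deriv v) := hv.continuous_deriv le_rfl
    -- bound on deriv v on [-1,1]
    have hB : ∀ x ∈ Set.Icc (-1:ℝ) 1, (deriv v x) ^ 2 ≤ 2 * α * (1 + ε) := by
      intro x hx
      set d := deriv v x with hd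
      by_cases hc : |d| ≤ α
      · have habs : |(-d / α)| ≤ 1 := by
          rw [abs_div, abs_neg, abs_of_pos hα0, div_le_one hα0]
          exact hc
        have hmem : (x, -d / α) ∈ S := ⟨hx, abs_le.1 habs⟩
        have hαne : α ≠ 0 := ne_of_gt hα0
        have h := hpt _ hmem
        simp only at h
        rw [← hd] at h
        have hq : 1 + α / 2 * (-d / α) ^ 2 + d * (-d / α) + ε
            = 1 + ε - d ^ 2 / (2 * α) := by field_simp; ring
        rw [hq] at h
        have h2 := (div_le_iff₀ (by positivity : (0:ℝ) < 2 * α)).1 (sub_nonneg.1 h)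
        nlinarith [h2]
      · push_neg at hc
        have hd0 : 0 < |d| := by linarith
        set u : ℝ := if 0 ≤ d then (-1:ℝ) else 1 with hu_def
        have humem : u ∈ Set.Icc (-1:ℝ) 1 := by
          rw [hu_def]; split_ifs <;> norm_num
        have hdu : d * u = -|d| := by
          rw [hu_def]; split_ifs with h
          · rw [abs_of_nonneg h]; ring
          · push_neg at h; rw [abs_of_neg h]; ring
        have hu2 : u ^ 2 = 1 := by
          rw [hu_def]; split_ifs <;> norm_num
        have h := hpt (x, u) ⟨hx, humem⟩
        simp only at h
        rw [← hd, hu2, hdu] at h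
        nlinarith
    -- the bound on |deriv v|
    have hBd : ∀ x ∈ Set.Icc (-1:ℝ) 1, |deriv v x| ≤ 2 * s + s * ε := by
      intro x hx
      have h1 : (deriv v x)^2 ≤ (2 * s + s * ε)^2 := by
        have := hB x hx
        nlinarith [hε.le, sq_nonneg ε]
      calc |deriv v x| = Real.sqrt ((deriv v x)^2) := (Real.sqrt_sq_eq_abs _).symm
        _ ≤ Real.sqrt ((2 * s + s * ε)^2) := Real.sqrt_le_sqrt h1
        _ = 2 * s + s * ε := Real.sqrt_sq (by positivity)
    -- pointwise comparison on S
    set g : ℝ × ℝ → ℝ := fun p => 1 + α / 2 * p.2 ^ 2 + deriv v p.1 * p.2 with hg_def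
    have hgcont : Continuous g := by
      apply Continuous.add
      · exact continuous_const.add (continuous_const.mul ((continuous_snd).pow 2))
      · exact (hdc.comp continuous_fst).mul continuous_snd
    have hptw : ∀ p ∈ S, F p ≤ g p + (ε + 2 * s * ε) := by
      rintro ⟨x, u⟩ ⟨hx, hu⟩
      have hu1 : |u| ≤ 1 := abs_le.2 ⟨hu.1, hu.2⟩
      have hd := hBd x hx
      set d := deriv v x with hd_def
      have hdu : -((2 * s + s * ε) * |u|) ≤ d * u := by
        have h1 : |d * u| ≤ (2 * s + s * ε) * |u| := by
          rw [abs_mul]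
          exact mul_le_mul_of_nonneg_right hd (abs_nonneg _)
        linarith [neg_abs_le (d * u)]
      have hau : |u| ^ 2 = u ^ 2 := sq_abs u
      have key : (s * |u| - 1)^2 ≤ 1 + α / 2 * u^2 + d * u + (ε + 2 * s * ε) := by
        nlinarith [abs_nonneg u, mul_nonneg (mul_nonneg hs0 hε.le) (sub_nonneg.2 hu1)]
      simpa [hF_def, hg_def] using key
    -- integrability of g
    obtain ⟨Cg, hCg⟩ := (isCompact_Icc.prod isCompact_Icc).exists_bound_of_continuousOn
      hgcont.continuousOn
    have hgint : Integrable g μ := by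
      refine Integrable.mono' (integrable_const Cg) hgcont.aestronglyMeasurable ?_
      filter_upwards [hae] with p hp
      exact hCg p hp
    have hgint' : Integrable (fun p => g p + (ε + 2 * s * ε)) μ :=
      hgint.add (integrable_const _)
    have hIle : (∫ p, F p ∂μ) ≤ ∫ p, (g p + (ε + 2 * s * ε)) ∂μ := by
      refine integral_mono_ae hFint hgint' ?_
      filter_upwards [hae] with p hp
      exact hptw p hp
    have hsplit : (∫ p, (g p + (ε + 2 * s * ε)) ∂μ)
        = (∫ p, g p ∂μ) + (ε + 2 * s * ε) * M := by
      rw [integral_add hgint (integrable_const _), integral_const]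
      simp [hM_def, smul_eq_mul, mul_comm, Measure.real]
    have hgε : (∫ p, g p ∂μ) ≤ ε := by
      refine le_trans (le_of_eq (integral_congr_ae ?_)) hint
      filter_upwards with p
      simp [hg_def]
    calc (∫ p, F p ∂μ) ≤ (∫ p, g p ∂μ) + (ε + 2 * s * ε) * M := by rw [← hsplit]; exact hIle
      _ ≤ ε + (ε + 2 * s * ε) * M := by linarith
      _ = ε * C := by rw [hC_def]; ring
  -- conclude ∫ F = 0
  have hF0 : (∫ p, F p ∂μ) = 0 := by
    have hnn : 0 ≤ ∫ p, F p ∂μ := integral_nonneg fun p => sq_nonneg _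
    by_contra h
    have hpos : 0 < ∫ p, F p ∂μ := lt_of_le_of_ne hnn (Ne.symm h)
    set I := ∫ p, F p ∂μ with hI
    have hε0 : 0 < min (α / 2 - 1) (I / (2 * (C + 1))) := by
      apply lt_min (by linarith) (by positivity)
    have h1 := key _ hε0 (min_le_left _ _)
    have h2 : min (α / 2 - 1) (I / (2 * (C + 1))) ≤ I / (2 * (C + 1)) := min_le_right _ _
    have h3 : min (α / 2 - 1) (I / (2 * (C + 1))) * C ≤ (I / (2 * (C + 1))) * C :=
      mul_le_mul_of_nonneg_right h2 hC0
    have h4 : (I / (2 * (C + 1))) * C < I := by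
      rw [div_mul_eq_mul_div, div_lt_iff₀ (by positivity)]
      nlinarith
    linarith
  have hnn : (0 : (ℝ × ℝ) → ℝ) ≤ᵐ[μ] F :=
    Filter.Eventually.of_forall fun p => sq_nonneg (s * |p.2| - 1)
  have hFz : ∀ᵐ p ∂μ, F p = 0 := by
    have := (integral_eq_zero_iff_of_nonneg_ae hnn hFint).1 hF0
    filter_upwards [this.le] with p hp
    exact le_antisymm hp (sq_nonneg _)
  -- translate F p = 0 into the claim
  have hsval : s * Real.sqrt (2 / α) = 1 := by
    rw [hs_def, ← Real.sqrt_mul hα2]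
    rw [show α / 2 * (2 / α) = 1 by field_simp]
    exact Real.sqrt_one
  have hspos : 0 < s := Real.sqrt_pos.2 (by linarith)
  filter_upwards [hFz] with p hp
  have h1 : s * |p.2| - 1 = 0 := by
    have := pow_eq_zero_iff (n := 2) (by norm_num) |>.1 hp
    exact this
  have h2 : s * |p.2| = s * Real.sqrt (2 / α) := by rw [hsval]; linarith
  exact mul_left_cancel₀ (ne_of_gt hspos) h2
end
end

section
/- In the one-dimensional setting X = [−1,1], U = [−1,1], X_T = {0}, f(x,u) = u, with μ_T = δ_0 the Dirac measure at 0, consider the family of Lagrangians l_α(x,u) = 1 + (α/2)u² for α ≥ 0. Let μ ∈ M_+(X×U) with μ(X×U) > 0. If l_α ∈ IOCP(μ,δ_0) for some α with 0 ≤ α ≤ 2, then: (i) |u| = 1 for μ-almost every (x,u) ∈ X×U, and (ii) l_{α̃} ∈ IOCP(μ,δ_0) for every α̃ with 0 ≤ α̃ ≤ 2. -/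
open MeasureTheory

lemma ae_memK (μ : Measure (ℝ × ℝ))
    (hμs : μ (((Set.Icc (-1:ℝ) 1) ×ˢ (Set.Icc (-1:ℝ) 1))ᶜ) = 0) :
    ∀ᵐ p ∂μ, p ∈ (Set.Icc (-1:ℝ) 1) ×ˢ (Set.Icc (-1:ℝ) 1) := by
  rw [ae_iff]; exact hμs

lemma integ_cont (μ : Measure (ℝ × ℝ)) [IsFiniteMeasure μ]
    (hμs : μ (((Set.Icc (-1:ℝ) 1) ×ˢ (Set.Icc (-1:ℝ) 1))ᶜ) = 0)
    (f : ℝ × ℝ → ℝ) (hf : Continuous f) : Integrable f μ := by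
  obtain ⟨C, hC⟩ := ((isCompact_Icc.prod isCompact_Icc)).exists_bound_of_continuousOn
    hf.continuousOn
  exact Integrable.mono' (integrable_const C) hf.aestronglyMeasurable
    ((ae_memK μ hμs).mono fun p hp => hC p hp)

lemma alg1 (a c u ε : ℝ) (ha0 : 0 ≤ a) (ha2 : a ≤ 2) (hu : |u| ≤ 1)
    (hc : |c| ≤ 1 + a / 2 + ε) (hε : 0 ≤ ε) :
    (1 - |u|) ^ 2 ≤ 1 + a / 2 * u ^ 2 + c * u + ε := by
  have h1 : -(|c| * |u|) ≤ c * u := by rw [← abs_mul]; exact neg_abs_le _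
  nlinarith [mul_le_mul_of_nonneg_right hc (abs_nonneg u), abs_nonneg u, abs_nonneg c,
    sq_abs u, mul_nonneg (mul_nonneg (sub_nonneg.2 hu) (abs_nonneg u)) (sub_nonneg.2 ha2),
    mul_nonneg (sub_nonneg.2 hu) hε]

lemma bound_of_cert (a ε : ℝ) (d : ℝ → ℝ)
    (h2 : ∀ p ∈ (Set.Icc (-1:ℝ) 1) ×ˢ (Set.Icc (-1:ℝ) 1),
      0 ≤ (1 + a / 2 * p.2 ^ 2) + d p.1 * p.2 + ε) :
    ∀ x ∈ Set.Icc (-1:ℝ) 1, |d x| ≤ 1 + a / 2 + ε := by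
  intro x hx
  have hb1 := h2 (x, 1) ⟨hx, by norm_num⟩
  have hb2 := h2 (x, -1) ⟨hx, by norm_num⟩
  simp only at hb1 hb2
  rw [abs_le]; constructor <;> nlinarith


noncomputable section

/-- In the one-dimensional example with `X = U = [−1,1]`, `X_T = {0}`,
`f(x,u) = u` and `μ_T = δ₀`: if `μ ≠ 0` and `l_α(x,u) = 1 + (α/2)u²` belongs to
`IOCP(μ, δ₀)` for some `0 ≤ α ≤ 2`, then (i) `|u| = 1` for `μ`-almost every `(x,u)`, and
(ii) `l_α̃ ∈ IOCP(μ, δ₀)` for every `0 ≤ α̃ ≤ 2`. -/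
theorem stmt_15 (α : ℝ) (hα0 : 0 ≤ α) (hα2 : α ≤ 2)
    (μ : Measure (ℝ × ℝ)) [IsFiniteMeasure μ]
    (hμs : μ (((Set.Icc (-1:ℝ) 1) ×ˢ (Set.Icc (-1:ℝ) 1))ᶜ) = 0)
    (hμpos : 0 < μ ((Set.Icc (-1:ℝ) 1) ×ˢ (Set.Icc (-1:ℝ) 1)))
    (hl : ∀ ε : ℝ, 0 < ε →
      IOCPe1 μ (Measure.dirac 0) ε (fun p => 1 + α / 2 * p.2 ^ 2)) :
    (∀ᵐ p ∂μ, |p.2| = 1) ∧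
    (∀ α' : ℝ, 0 ≤ α' → α' ≤ 2 → ∀ ε : ℝ, 0 < ε →
      IOCPe1 μ (Measure.dirac 0) ε (fun p => 1 + α' / 2 * p.2 ^ 2)) := by
  set M : ℝ := (μ Set.univ).toReal with hM
  have hM0 : 0 ≤ M := ENNReal.toReal_nonneg
  have hF_int : Integrable (fun p : ℝ × ℝ => (1 - |p.2|) ^ 2) μ :=
    integ_cont μ hμs _ (by fun_prop)
  -- key integral bound
  have key : ∀ ε : ℝ, 0 < ε → (∫ p, (1 - |p.2|) ^ 2 ∂μ) ≤ ε * (1 + M) := by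
    intro ε hε
    obtain ⟨v, hv, h1, h2, h3, h4⟩ := hl ε hε
    have hdc : Continuous (deriv v) := hv.continuous_deriv le_rfl
    have hφ_int : Integrable (fun p : ℝ × ℝ => (1 + α / 2 * p.2 ^ 2) + deriv v p.1 * p.2) μ :=
      integ_cont μ hμs _ (by fun_prop)
    have hdvb := bound_of_cert α ε (deriv v) h2
    have hmono : ∀ᵐ p ∂μ, (1 - |p.2|) ^ 2 ≤
        ((1 + α / 2 * p.2 ^ 2) + deriv v p.1 * p.2) + ε := by
      filter_upwards [ae_memK μ hμs] with p hp
      have := alg1 α (deriv v p.1) p.2 ε hα0 hα2 (abs_le.mpr (Set.mem_Icc.mp hp.2))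
        (hdvb p.1 hp.1) hε.le
      linarith
    calc (∫ p, (1 - |p.2|) ^ 2 ∂μ)
        ≤ ∫ p, (((1 + α / 2 * p.2 ^ 2) + deriv v p.1 * p.2) + ε) ∂μ :=
          integral_mono_ae hF_int (hφ_int.add (integrable_const ε)) hmono
      _ = (∫ p, ((1 + α / 2 * p.2 ^ 2) + deriv v p.1 * p.2) ∂μ) + M * ε := by
          rw [integral_add hφ_int (integrable_const ε), integral_const, smul_eq_mul]; rfl
      _ ≤ ε * (1 + M) := by nlinarith
  have hF0 : (∫ p, (1 - |p.2|) ^ 2 ∂μ) = 0 := by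
    refine le_antisymm ?_ (integral_nonneg fun p => sq_nonneg _)
    refine le_of_forall_pos_le_add fun δ hδ => ?_
    have h1M : (0:ℝ) < 1 + M := by linarith
    have := key (δ / (1 + M)) (div_pos hδ h1M)
    rw [div_mul_cancel₀ _ (ne_of_gt h1M)] at this
    linarith
  have hae : ∀ᵐ p ∂μ, |p.2| = 1 := by
    have := (integral_eq_zero_iff_of_nonneg (fun p => sq_nonneg _) hF_int).mp hF0
    filter_upwards [this] with p hp
    have : (1 - |p.2|) ^ 2 = 0 := hp
    have := (pow_eq_zero_iff two_ne_zero).mp this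
    linarith [this]
  refine ⟨hae, ?_⟩
  intro α' hα'0 hα'2 ε hε
  obtain ⟨v, hv, h1, h2, h3, h4⟩ := hl (ε / 2) (by linarith)
  set c : ℝ := (2 + α') / (2 + α) with hc
  have hc0 : 0 ≤ c := by positivity
  have hc2 : c ≤ 2 := by
    rw [div_le_iff₀ (by linarith)]; linarith
  have hca : c * (1 + α / 2) = 1 + α' / 2 := by
    field_simp [hc]
    rw [hc, div_mul_cancel₀ _ (ne_of_gt (by linarith))]
  refine ⟨fun x => c * v x, contDiff_const.mul hv, ?_, ?_, ?_, ?_⟩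
  · -- integral condition
    have hderivw : ∀ x, deriv (fun x => c * v x) x = c * deriv v x := fun x =>
      deriv_const_mul c ((hv.differentiable one_ne_zero) x)
    have hcongr : (fun p : ℝ × ℝ => (1 + α' / 2 * p.2 ^ 2) + deriv (fun x => c * v x) p.1 * p.2)
        =ᵐ[μ] fun p => c * ((1 + α / 2 * p.2 ^ 2) + deriv v p.1 * p.2) := by
      filter_upwards [hae] with p hp
      have hu2 : p.2 ^ 2 = 1 := by rw [← sq_abs, hp]; norm_num
      rw [hderivw p.1, hu2]
      linear_combination -hca
    rw [integral_congr_ae hcongr, integral_const_mul]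
    nlinarith [h1]
  · -- pointwise condition
    intro p hp
    have hderivw : deriv (fun x => c * v x) p.1 = c * deriv v p.1 :=
      deriv_const_mul c ((hv.differentiable one_ne_zero) p.1)
    have hdvb := bound_of_cert α (ε / 2) (deriv v) h2 p.1 hp.1
    have hcb : |c * deriv v p.1| ≤ 1 + α' / 2 + ε := by
      rw [abs_mul, abs_of_nonneg hc0]
      calc c * |deriv v p.1| ≤ c * (1 + α / 2 + ε / 2) :=
            mul_le_mul_of_nonneg_left hdvb hc0
        _ = c * (1 + α / 2) + c * (ε / 2) := by ring
        _ ≤ 1 + α' / 2 + ε := by nlinarith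
    have := alg1 α' (c * deriv v p.1) p.2 ε hα'0 hα'2 (abs_le.mpr (Set.mem_Icc.mp hp.2))
      hcb hε.le
    have hsq := sq_nonneg (1 - |p.2|)
    rw [hderivw]
    linarith
  · -- dirac condition
    rw [integral_dirac] at h3 ⊢
    have hv0 : v 0 ≤ 0 := h4 0 rfl
    show -ε ≤ c * v 0
    nlinarith [mul_le_mul_of_nonneg_left h3 hc0]
  · intro x hx
    rw [Set.mem_singleton_iff] at hx
    subst hx
    exact mul_nonpos_of_nonneg_of_nonpos hc0 (h4 0 rfl)
end
end
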